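/- arXiv:2403.06042 — 9 statements merged into one kernel-verified Lean document; each statement's English description precedes it below -/
import Mathlib

section
/- Let V be a real normed space, E a real Hilbert space, μ a measure on a measurable space α, and p > 1 a real number. Let D : V → L^p(μ;E) be a continuous linear map and ℓ : V → ℝ a continuous linear functional, and define I : V → ℝ by I(v) = (1/p)·∫ ‖(Dv)(x)‖^p dμ(x) − ℓ(v). Then u ∈ V satisfies I(u) ≤ I(v) for all v ∈ V if and only if ∫ ⟪Φ_p((Du)(x)), (Dv)(x)⟫ dμ(x) = ℓ(v) for all v ∈ V. -/
open MeasureTheory Filter Topology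
open scoped RealInnerProductSpace ENNReal

namespace ELaux

variable {E : Type*} [NormedAddCommGroup E] [InnerProductSpace ℝ E]

theorem norm_phi {p : ℝ} (hp : 1 < p) (a : E) :
    ‖(‖a‖ ^ (p - 2)) • a‖ = ‖a‖ ^ (p - 1) := by
  rcases eq_or_ne a 0 with rfl | ha
  · simp [Real.zero_rpow (by linarith : p - 1 ≠ 0)]
  · have h0 : ‖a‖ ≠ 0 := norm_ne_zero_iff.mpr ha
    rw [norm_smul, Real.norm_eq_abs, abs_of_nonneg (Real.rpow_nonneg (norm_nonneg a) _)]
    calc ‖a‖ ^ (p - 2) * ‖a‖ = ‖a‖ ^ (p - 2 + 1) := (Real.rpow_add_one h0 _).symm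
    _ = ‖a‖ ^ (p - 1) := by ring_nf

theorem key {p : ℝ} (hp : 1 < p) (a b : E) :
    ⟪(‖a‖ ^ (p - 2)) • a, b - a⟫ ≤ ‖b‖ ^ p / p - ‖a‖ ^ p / p := by
  have hp0 : (0 : ℝ) < p := by linarith
  rcases eq_or_ne a 0 with rfl | ha
  · simp only [smul_zero, inner_zero_left, norm_zero, Real.zero_rpow hp0.ne', zero_div]
    have : 0 ≤ ‖b‖ ^ p / p := div_nonneg (Real.rpow_nonneg (norm_nonneg b) _) hp0.le
    linarith
  · have h0 : (0 : ℝ) < ‖a‖ := norm_pos_iff.mpr ha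
    have hpq : p.HolderConjugate (p / (p - 1)) := .conjExponent hp
    rw [real_inner_smul_left, inner_sub_right, real_inner_self_eq_norm_sq]
    have e1 : ‖a‖ ^ (p - 2) * ‖a‖ ^ 2 = ‖a‖ ^ p := by
      rw [← Real.rpow_two, ← Real.rpow_add h0]; ring_nf
    have e2 : ‖a‖ ^ (p - 2) * ⟪a, b⟫ ≤ ‖a‖ ^ (p - 1) * ‖b‖ := by
      calc ‖a‖ ^ (p - 2) * ⟪a, b⟫ ≤ ‖a‖ ^ (p - 2) * (‖a‖ * ‖b‖) :=
            mul_le_mul_of_nonneg_left (real_inner_le_norm a b)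
              (Real.rpow_nonneg (norm_nonneg a) _)
      _ = ‖a‖ ^ (p - 2) * ‖a‖ * ‖b‖ := by ring
      _ = ‖a‖ ^ (p - 2 + 1) * ‖b‖ := by rw [Real.rpow_add_one h0.ne']
      _ = ‖a‖ ^ (p - 1) * ‖b‖ := by ring_nf
    have e3 : ‖a‖ ^ (p - 1) * ‖b‖ ≤ (‖a‖ ^ (p - 1)) ^ (p / (p - 1)) / (p / (p - 1)) + ‖b‖ ^ p / p :=
      Real.young_inequality_of_nonneg (Real.rpow_nonneg (norm_nonneg a) (p - 1))
        (norm_nonneg b) hpq.symm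
    have e4 : (‖a‖ ^ (p - 1)) ^ (p / (p - 1)) = ‖a‖ ^ p := by
      rw [← Real.rpow_mul (norm_nonneg a)]
      congr 1
      field_simp [sub_ne_zero.mpr hp.ne']
    rw [e4] at e3
    have e5 : ‖a‖ ^ p / (p / (p - 1)) - ‖a‖ ^ p = -(‖a‖ ^ p / p) := by
      rw [div_div_eq_mul_div]
      field_simp
      ring
    linarith


theorem cont_phi {p : ℝ} (hp : 1 < p) :
    Continuous (fun a : E => (‖a‖ ^ (p - 2)) • a) := by
  rw [continuous_iff_continuousAt]
  intro a
  rcases eq_or_ne a 0 with rfl | ha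
  · rw [ContinuousAt, smul_zero]
    have h1 : Tendsto (fun a : E => ‖a‖) (𝓝 0) (𝓝 0) := by
      simpa using continuous_norm.tendsto (0 : E)
    have h2 : Tendsto (fun t : ℝ => t ^ (p - 1)) (𝓝 0) (𝓝 0) := by
      have := (Real.continuousAt_rpow_const 0 (p - 1) (Or.inr (by linarith))).tendsto
      simpa [Real.zero_rpow (by linarith : p - 1 ≠ 0)] using this
    exact squeeze_zero_norm (fun x => (norm_phi hp x).le) (h2.comp h1)
  · have h0 : ‖a‖ ≠ 0 := norm_ne_zero_iff.mpr ha
    exact ContinuousAt.smul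
      ((Real.continuousAt_rpow_const _ _ (Or.inl h0)).comp continuous_norm.continuousAt)
      continuousAt_id

variable {α : Type*} [MeasurableSpace α] {μ : Measure α}

theorem integrable_bound {p : ℝ} (hp : 1 < p)
    {F : Type*} [NormedAddCommGroup F] {G : Type*} [NormedAddCommGroup G]
    {f : α → F} {g : α → G}
    (hf : MemLp f (ENNReal.ofReal p) μ) (hg : MemLp g (ENNReal.ofReal p) μ) :
    Integrable (fun x => ‖f x‖ ^ (p - 1) * ‖g x‖) μ := by
  have hpq : p.HolderConjugate (p / (p - 1)) := .conjExponent hp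
  have hφ : MemLp (fun x => ‖f x‖ ^ (p - 1)) (ENNReal.ofReal (p / (p - 1))) μ := by
    have h := hf.norm_rpow_div (ENNReal.ofReal (p - 1))
    rw [ENNReal.toReal_ofReal (by linarith : (0:ℝ) ≤ p - 1)] at h
    rwa [ENNReal.ofReal_div_of_pos (by linarith : (0:ℝ) < p - 1)]
  have hcond : (1 : ℝ≥0∞) / 1 =
      1 / ENNReal.ofReal (p / (p - 1)) + 1 / ENNReal.ofReal p := by
    rw [eq_comm]
    simpa [one_div, add_comm] using hpq.inv_add_inv_ennreal
  have hmul := (hg.norm).smul (r := 1) hφ (hpqr := ⟨by simpa [one_div] using hcond.symm⟩)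
  rw [memLp_one_iff_integrable] at hmul
  exact hmul.congr (Filter.Eventually.of_forall fun x => by
    simp [Pi.smul_apply', smul_eq_mul])

theorem integrable_inner {p : ℝ} (hp : 1 < p) {f g : α → E}
    (hf : MemLp f (ENNReal.ofReal p) μ) (hg : MemLp g (ENNReal.ofReal p) μ) :
    Integrable (fun x => ⟪(‖f x‖ ^ (p - 2)) • f x, g x⟫) μ := by
  have hsm : AEStronglyMeasurable (fun x => ⟪(‖f x‖ ^ (p - 2)) • f x, g x⟫) μ :=
    AEStronglyMeasurable.inner
      (((hf.1.norm.aemeasurable.pow_const (p - 2)).aestronglyMeasurable).smul hf.1) hg.1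
  refine (integrable_bound hp hf hg).mono' hsm (Filter.Eventually.of_forall fun x => ?_)
  calc ‖⟪(‖f x‖ ^ (p - 2)) • f x, g x⟫‖ ≤ ‖(‖f x‖ ^ (p - 2)) • f x‖ * ‖g x‖ := by
        rw [Real.norm_eq_abs]; exact abs_real_inner_le_norm _ _
  _ = ‖f x‖ ^ (p - 1) * ‖g x‖ := by rw [norm_phi hp]

theorem integrable_rpow {p : ℝ} (hp : 1 < p)
    {F : Type*} [NormedAddCommGroup F] {f : α → F}
    (hf : MemLp f (ENNReal.ofReal p) μ) :
    Integrable (fun x => ‖f x‖ ^ p) μ := by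
  have h := hf.norm_rpow (by simp; linarith) ENNReal.ofReal_ne_top
  rw [ENNReal.toReal_ofReal (by linarith : (0:ℝ) ≤ p)] at h
  exact memLp_one_iff_integrable.mp h

theorem aesm_inner {p : ℝ} {f g : α → E}
    (hf : AEStronglyMeasurable f μ) (hg : AEStronglyMeasurable g μ) :
    AEStronglyMeasurable (fun x => ⟪(‖f x‖ ^ (p - 2)) • f x, g x⟫) μ :=
  AEStronglyMeasurable.inner
    (((hf.norm.aemeasurable.pow_const (p - 2)).aestronglyMeasurable).smul hf) hg

end ELaux

/-- Euler–Lagrange characterization: `u` minimizes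
`I(v) = (1/p)·∫ ‖(Dv)(x)‖^p dμ − ℓ(v)` over `V` if and only if
`∫ ⟪‖(Du)(x)‖^{p-2}·(Du)(x), (Dv)(x)⟫ dμ = ℓ(v)` for all `v ∈ V`. -/
theorem minimizer_iff_eulerLagrange
    {V : Type*} [NormedAddCommGroup V] [NormedSpace ℝ V]
    {E : Type*} [NormedAddCommGroup E] [InnerProductSpace ℝ E] [CompleteSpace E]
    {α : Type*} [MeasurableSpace α] (μ : Measure α)
    (p : ℝ) (hp : 1 < p) [Fact (1 ≤ ENNReal.ofReal p)]
    (D : V →L[ℝ] Lp E (ENNReal.ofReal p) μ) (ℓ : V →L[ℝ] ℝ)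
    (I : V → ℝ)
    (hI : ∀ v, I v = (1 / p) * (∫ x, ‖D v x‖ ^ p ∂μ) - ℓ v)
    (u : V) :
    (∀ v, I u ≤ I v) ↔
      ∀ v, (∫ x, ⟪(‖D u x‖ ^ (p - 2)) • D u x, D v x⟫ ∂μ) = ℓ v := by
  have hp0 : (0 : ℝ) < p := by linarith
  have memf : ∀ v : V, MemLp (⇑(D v)) (ENNReal.ofReal p) μ := fun v => Lp.memLp (D v)
  have intp : ∀ v : V, Integrable (fun x => ‖D v x‖ ^ p) μ := fun v =>
    ELaux.integrable_rpow hp (memf v)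
  constructor
  · -- minimizer → Euler–Lagrange
    intro hmin v
    have key : ∀ w : V, ℓ w ≤ ∫ x, ⟪(‖D u x‖ ^ (p - 2)) • D u x, D w x⟫ ∂μ := by
      intro w
      have hDadd : ∀ t : ℝ, (⇑(D (u + t • w)) : α → E) =ᵐ[μ] fun x => D u x + t • D w x := by
        intro t
        have h1 : D (u + t • w) = D u + t • D w := by rw [map_add, _root_.map_smul]
        rw [h1]
        filter_upwards [Lp.coeFn_add (D u) (t • D w), Lp.coeFn_smul t (D w)] with x h2 h3
        rw [h2, Pi.add_apply, h3, Pi.smul_apply]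
      have hmem_t : ∀ t : ℝ, MemLp (fun x => D u x + t • D w x) (ENNReal.ofReal p) μ :=
        fun t => (memf u).add ((memf w).const_smul t)
      have step1 : ∀ t : ℝ, 0 < t →
          ℓ w ≤ ∫ x, ⟪(‖D u x + t • D w x‖ ^ (p - 2)) • (D u x + t • D w x), D w x⟫ ∂μ := by
        intro t ht
        have hIneq := hmin (u + t • w)
        rw [hI, hI] at hIneq
        have hcong : ∫ x, ‖D (u + t • w) x‖ ^ p ∂μ = ∫ x, ‖D u x + t • D w x‖ ^ p ∂μ :=
          integral_congr_ae ((hDadd t).mono fun x hx => by simp only [hx])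
        rw [hcong, map_add, _root_.map_smul, smul_eq_mul] at hIneq
        have hpt : ∀ x, ‖D u x + t • D w x‖ ^ p / p - ‖D u x‖ ^ p / p
            ≤ t * ⟪(‖D u x + t • D w x‖ ^ (p - 2)) • (D u x + t • D w x), D w x⟫ := by
          intro x
          have hk := ELaux.key hp (D u x + t • D w x) (D u x)
          have hba : D u x - (D u x + t • D w x) = -(t • D w x) := by abel
          rw [hba, inner_neg_right, real_inner_smul_right] at hk
          linarith
        have hint2 : Integrable (fun x =>
            t * ⟪(‖D u x + t • D w x‖ ^ (p - 2)) • (D u x + t • D w x), D w x⟫) μ :=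
          (ELaux.integrable_inner hp (hmem_t t) (memf w)).const_mul t
        have hint1a : Integrable (fun x => ‖D u x + t • D w x‖ ^ p / p) μ :=
          (ELaux.integrable_rpow hp (hmem_t t)).div_const p
        have hint1b : Integrable (fun x => ‖D u x‖ ^ p / p) μ := (intp u).div_const p
        have hmono := integral_mono (hint1a.sub hint1b) hint2 hpt
        simp only [Pi.sub_apply] at hmono
        rw [integral_sub hint1a hint1b, integral_div, integral_div,
          integral_const_mul] at hmono
        rw [← (mul_le_mul_iff_right₀ ht)]
        have e1 : (1 : ℝ) / p * (∫ x, ‖D u x + t • D w x‖ ^ p ∂μ)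
            = (∫ x, ‖D u x + t • D w x‖ ^ p ∂μ) / p := one_div_mul_eq_div _ _
        have e2 : (1 : ℝ) / p * (∫ x, ‖D u x‖ ^ p ∂μ)
            = (∫ x, ‖D u x‖ ^ p ∂μ) / p := one_div_mul_eq_div _ _
        linarith
      have hbound : Integrable (fun x => (‖D u x‖ + ‖D w x‖) ^ (p - 1) * ‖D w x‖) μ := by
        have hb := ELaux.integrable_bound hp (f := fun x => ‖D u x‖ + ‖D w x‖)
          (g := ⇑(D w)) ((memf u).norm.add (memf w).norm) (memf w)
        refine hb.congr (Filter.Eventually.of_forall fun x => ?_)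
        dsimp only
        rw [Real.norm_of_nonneg (by positivity : (0:ℝ) ≤ ‖D u x‖ + ‖D w x‖)]
      have htend : Tendsto (fun t : ℝ =>
          ∫ x, ⟪(‖D u x + t • D w x‖ ^ (p - 2)) • (D u x + t • D w x), D w x⟫ ∂μ)
          (nhdsWithin (0 : ℝ) (Set.Ioi 0))
          (𝓝 (∫ x, ⟪(‖D u x‖ ^ (p - 2)) • D u x, D w x⟫ ∂μ)) := by
        apply tendsto_integral_filter_of_dominated_convergence
          (bound := fun x => (‖D u x‖ + ‖D w x‖) ^ (p - 1) * ‖D w x‖)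
        · exact Filter.Eventually.of_forall fun t =>
            ELaux.aesm_inner (hmem_t t).1 (memf w).1
        · filter_upwards [Ioc_mem_nhdsGT (zero_lt_one (α := ℝ))] with t ht
          apply Filter.Eventually.of_forall
          intro x
          have hna : ‖D u x + t • D w x‖ ≤ ‖D u x‖ + ‖D w x‖ := by
            refine (norm_add_le _ _).trans ?_
            have : ‖t • D w x‖ ≤ ‖D w x‖ := by
              rw [norm_smul, Real.norm_eq_abs, abs_of_pos ht.1]
              nlinarith [norm_nonneg (D w x), ht.2]
            linarith
          calc ‖⟪(‖D u x + t • D w x‖ ^ (p - 2)) • (D u x + t • D w x), D w x⟫‖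
              ≤ ‖(‖D u x + t • D w x‖ ^ (p - 2)) • (D u x + t • D w x)‖ * ‖D w x‖ := by
                rw [Real.norm_eq_abs]; exact abs_real_inner_le_norm _ _
          _ = ‖D u x + t • D w x‖ ^ (p - 1) * ‖D w x‖ := by rw [ELaux.norm_phi hp]
          _ ≤ (‖D u x‖ + ‖D w x‖) ^ (p - 1) * ‖D w x‖ := by
                exact mul_le_mul_of_nonneg_right
                  (Real.rpow_le_rpow (norm_nonneg _) hna (by linarith)) (norm_nonneg _)
        · exact hbound
        · apply Filter.Eventually.of_forall
          intro x
          have hc : Continuous (fun t : ℝ =>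
              ⟪(‖D u x + t • D w x‖ ^ (p - 2)) • (D u x + t • D w x), D w x⟫) :=
            Continuous.inner ((ELaux.cont_phi hp).comp
              (continuous_const.add (continuous_id.smul continuous_const))) continuous_const
          have h0 := hc.tendsto 0
          simp only [zero_smul, add_zero] at h0
          exact h0.mono_left nhdsWithin_le_nhds
      exact ge_of_tendsto htend (eventually_nhdsWithin_of_forall fun t ht => step1 t ht)
    have k1 := key v
    have k2 := key (-v)
    have hneg : ∫ x, ⟪(‖D u x‖ ^ (p - 2)) • D u x, D (-v) x⟫ ∂μ
        = -∫ x, ⟪(‖D u x‖ ^ (p - 2)) • D u x, D v x⟫ ∂μ := by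
      rw [← integral_neg]
      apply integral_congr_ae
      have h1 : D (-v) = -(D v) := map_neg D v
      rw [h1]
      filter_upwards [Lp.coeFn_neg (D v)] with x h2
      rw [h2, Pi.neg_apply, inner_neg_right]
    rw [hneg, map_neg] at k2
    linarith
  · -- Euler–Lagrange → minimizer
    intro hEL v
    have hsub : (⇑(D (v - u)) : α → E) =ᵐ[μ] fun x => D v x - D u x := by
      rw [map_sub]
      filter_upwards [Lp.coeFn_sub (D v) (D u)] with x h
      rw [h, Pi.sub_apply]
    have h1 : ∫ x, ⟪(‖D u x‖ ^ (p - 2)) • D u x, D v x - D u x⟫ ∂μ = ℓ v - ℓ u := by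
      rw [← map_sub ℓ v u, ← hEL (v - u)]
      apply integral_congr_ae
      filter_upwards [hsub] with x hx
      rw [hx]
    have hint1 : Integrable (fun x => ⟪(‖D u x‖ ^ (p - 2)) • D u x, D v x - D u x⟫) μ :=
      ELaux.integrable_inner hp (memf u) ((memf v).sub (memf u))
    have hint2a : Integrable (fun x => ‖D v x‖ ^ p / p) μ := (intp v).div_const p
    have hint2b : Integrable (fun x => ‖D u x‖ ^ p / p) μ := (intp u).div_const p
    have hmono := integral_mono hint1 (hint2a.sub hint2b)
      (fun x => ELaux.key hp (D u x) (D v x))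
    simp only [Pi.sub_apply] at hmono
    rw [integral_sub hint2a hint2b, integral_div, integral_div, h1] at hmono
    rw [hI u, hI v]
    have e1 : (1 : ℝ) / p * (∫ x, ‖D v x‖ ^ p ∂μ) = (∫ x, ‖D v x‖ ^ p ∂μ) / p :=
      one_div_mul_eq_div _ _
    have e2 : (1 : ℝ) / p * (∫ x, ‖D u x‖ ^ p ∂μ) = (∫ x, ‖D u x‖ ^ p ∂μ) / p :=
      one_div_mul_eq_div _ _
    linarith
end

section
/- Let V be a real normed space, p > 1 a real number, A > 0, and ℓ : V → ℝ a linear functional with |ℓ(v)| ≤ A·‖v‖ for all v ∈ V. If u ∈ V satisfies (1/p)·‖u‖^p − ℓ(u) ≤ (1/p)·‖v‖^p − ℓ(v) for all v ∈ V, then ‖u‖ ≤ ((2p)^{1/(p−1)} + 2(p−1)/p)·A^{1/(p−1)}. -/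
/-- Quantitative bound on a minimizer: if `|ℓ(v)| ≤ A·‖v‖` for all `v` and `u` minimizes
`v ↦ (1/p)·‖v‖^p − ℓ(v)`, then `‖u‖ ≤ ((2p)^{1/(p−1)} + 2(p−1)/p)·A^{1/(p−1)}`. -/
theorem minimizer_norm_bound
    {V : Type*} [NormedAddCommGroup V] [NormedSpace ℝ V]
    (p : ℝ) (hp : 1 < p) (A : ℝ) (hA : 0 < A)
    (ℓ : V →ₗ[ℝ] ℝ) (hℓ : ∀ v, |ℓ v| ≤ A * ‖v‖)
    (u : V) (hu : ∀ v : V, (1 / p) * ‖u‖ ^ p - ℓ u ≤ (1 / p) * ‖v‖ ^ p - ℓ v) :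
    ‖u‖ ≤ ((2 * p) ^ (1 / (p - 1)) + 2 * (p - 1) / p) * A ^ (1 / (p - 1)) := by
  have hp0 : (0:ℝ) < p := lt_trans one_pos hp
  have hp1 : (0:ℝ) < p - 1 := by linarith
  have hexp : (0:ℝ) < 1 / (p - 1) := by positivity
  have hApos : (0:ℝ) < A ^ (1 / (p - 1)) := Real.rpow_pos_of_pos hA _
  have htail : (0:ℝ) ≤ 2 * (p - 1) / p * A ^ (1 / (p - 1)) := by positivity
  -- main bound: ‖u‖ ≤ (2*p)^(1/(p-1)) * A^(1/(p-1))
  have key : ‖u‖ ≤ (2 * p) ^ (1 / (p - 1)) * A ^ (1 / (p - 1)) := by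
    have h0 := hu 0
    rw [norm_zero, map_zero, Real.zero_rpow (ne_of_gt hp0)] at h0
    -- (1/p)*‖u‖^p - ℓ u ≤ 0
    have hℓu : (1 / p) * ‖u‖ ^ p ≤ A * ‖u‖ := by
      have := hℓ u
      have := le_abs_self (ℓ u)
      nlinarith [h0]
    have hup : ‖u‖ ^ p ≤ p * A * ‖u‖ := by
      have hpinv : (0:ℝ) < 1/p := by positivity
      calc ‖u‖ ^ p = p * ((1/p) * ‖u‖ ^ p) := by field_simp
        _ ≤ p * (A * ‖u‖) := by nlinarith
        _ = p * A * ‖u‖ := by ring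
    rcases eq_or_lt_of_le (norm_nonneg u) with hn | hn
    · rw [← hn]; positivity
    · have hpow : ‖u‖ ^ (p - 1) ≤ p * A := by
        have hsplit : ‖u‖ ^ p = ‖u‖ ^ (p - 1) * ‖u‖ := by
          nth_rewrite 1 [show p = (p - 1) + 1 by ring]
          rw [Real.rpow_add hn, Real.rpow_one]
        rw [hsplit] at hup
        exact le_of_mul_le_mul_right (by simpa using hup) hn
      have h2 : ‖u‖ ^ (p - 1) ≤ 2 * p * A := by nlinarith
      have := Real.rpow_le_rpow (by positivity) h2 (le_of_lt hexp)
      rwa [← Real.rpow_mul (norm_nonneg u), mul_one_div, div_self (ne_of_gt hp1), Real.rpow_one,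
        show (2:ℝ) * p * A = (2*p) * A by ring,
        Real.mul_rpow (by positivity) (le_of_lt hA)] at this
  calc ‖u‖ ≤ (2 * p) ^ (1 / (p - 1)) * A ^ (1 / (p - 1)) := key
    _ ≤ ((2 * p) ^ (1 / (p - 1)) + 2 * (p - 1) / p) * A ^ (1 / (p - 1)) := by nlinarith
end

section
/- Let V and B be real normed spaces, E a real Hilbert space, μ a measure on a measurable space α, and p > 1 a real number. Let D : V → L^p(μ;E), T : V → B, and Ext : B → V be continuous linear maps with T(Ext g) = g for all g ∈ B. Let f ∈ B and let u ∈ V satisfy T u = f and ∫ ‖(Du)(x)‖^p dμ(x) ≤ ∫ ‖(Dv)(x)‖^p dμ(x) for every v ∈ V with T v = f. Then for every g ∈ B, |∫ ⟪Φ_p((Du)(x)), (D(Ext g))(x)⟫ dμ(x)| ≤ ‖D ∘ Ext‖^p · ‖f‖^{p−1} · ‖g‖. -/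
open MeasureTheory
open scoped RealInnerProductSpace ENNReal

theorem int_rpow_norm {α E : Type*} [MeasurableSpace α] [NormedAddCommGroup E] (μ : Measure α)
    (p : ℝ) (hp : 1 < p) [Fact (1 ≤ ENNReal.ofReal p)] (h : Lp E (ENNReal.ofReal p) μ) :
    ∫ x, ‖h x‖ ^ p ∂μ = ‖h‖ ^ p := by
  have hp0 : 0 < p := by linarith
  have h1 : ‖h‖ = (∫ x, ‖h x‖ ^ p ∂μ) ^ p⁻¹ := by
    rw [Lp.norm_def, (Lp.memLp h).eLpNorm_eq_integral_rpow_norm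
        (by simp [ENNReal.ofReal_eq_zero]; linarith) ENNReal.ofReal_ne_top,
      ENNReal.toReal_ofReal (by positivity), ENNReal.toReal_ofReal hp0.le]
  rw [h1, ← Real.rpow_mul (integral_nonneg fun x => by positivity),
    inv_mul_cancel₀ hp0.ne', Real.rpow_one]


/-- The bound `‖L_f‖ ≤ ‖E‖^p·‖f‖^{p−1}` on the Dirichlet-to-Neumann functional: if `u`
minimizes the `p`-energy among all `v` with `Tv = f`, then for every `g`,
`|∫ ⟪‖Du‖^{p−2}·Du, D(Ext g)⟫ dμ| ≤ ‖D∘Ext‖^p·‖f‖^{p−1}·‖g‖`. -/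
theorem dirichlet_to_neumann_bound
    {V B : Type*} [NormedAddCommGroup V] [NormedSpace ℝ V]
    [NormedAddCommGroup B] [NormedSpace ℝ B]
    {E : Type*} [NormedAddCommGroup E] [InnerProductSpace ℝ E] [CompleteSpace E]
    {α : Type*} [MeasurableSpace α] (μ : Measure α)
    (p : ℝ) (hp : 1 < p) [Fact (1 ≤ ENNReal.ofReal p)]
    (D : V →L[ℝ] Lp E (ENNReal.ofReal p) μ)
    (T : V →L[ℝ] B) (Ext : B →L[ℝ] V)
    (hTE : ∀ g : B, T (Ext g) = g)
    (f : B) (u : V) (hTu : T u = f)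
    (hmin : ∀ v : V, T v = f → (∫ x, ‖D u x‖ ^ p ∂μ) ≤ ∫ x, ‖D v x‖ ^ p ∂μ) :
    ∀ g : B, |∫ x, ⟪(‖D u x‖ ^ (p - 2)) • D u x, D (Ext g) x⟫ ∂μ| ≤
      ‖D.comp Ext‖ ^ p * ‖f‖ ^ (p - 1) * ‖g‖ := by
  intro g
  have hp0 : 0 < p := by linarith
  have hp1 : 0 < p - 1 := by linarith
  set q : ℝ := p / (p - 1) with hq
  have hqp : q.HolderConjugate p := (Real.HolderConjugate.conjExponent hp).symm
  set w : Lp E (ENNReal.ofReal p) μ := D (Ext g) with hw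
  set Φ : α → E := fun x => (‖D u x‖ ^ (p - 2)) • D u x with hΦ
  -- pointwise norm of Φ
  have hΦnorm : ∀ x, ‖Φ x‖ = ‖D u x‖ ^ (p - 1) := by
    intro x
    by_cases hx : D u x = 0
    · simp [hΦ, hx, Real.zero_rpow hp1.ne']
    · have hpos : (0:ℝ) < ‖D u x‖ := norm_pos_iff.mpr hx
      rw [hΦ, norm_smul, Real.norm_eq_abs, abs_of_nonneg (Real.rpow_nonneg (norm_nonneg _) _)]
      calc ‖D u x‖ ^ (p - 2) * ‖D u x‖
          = ‖D u x‖ ^ (p - 2) * ‖D u x‖ ^ (1:ℝ) := by rw [Real.rpow_one]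
        _ = ‖D u x‖ ^ (p - 1) := by rw [← Real.rpow_add hpos]; ring_nf
  -- measurability of Φ
  have hmeasΦ : AEStronglyMeasurable Φ μ := by
    have h1 : AEMeasurable (fun x => ‖D u x‖ ^ (p - 2)) μ :=
      ((Lp.aestronglyMeasurable (D u)).norm.aemeasurable).pow aemeasurable_const
    exact h1.aestronglyMeasurable.smul (Lp.aestronglyMeasurable (D u))
  -- Φ ∈ L^q
  have hΦq : MemLp Φ (ENNReal.ofReal q) μ := by
    have hb := (Lp.memLp (D u)).norm_rpow_div (ENNReal.ofReal (p - 1))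
    rw [ENNReal.toReal_ofReal hp1.le,
      ← ENNReal.ofReal_div_of_pos hp1] at hb
    exact hb.of_le hmeasΦ (Filter.Eventually.of_forall fun x => by
      rw [hΦnorm x, Real.norm_eq_abs, abs_of_nonneg (Real.rpow_nonneg (norm_nonneg _) _)])
  -- the key Hölder estimate
  have holder : ∫ x, ‖Φ x‖ * ‖w x‖ ∂μ ≤
      (∫ x, ‖Φ x‖ ^ q ∂μ) ^ (1/q) * (∫ x, ‖w x‖ ^ p ∂μ) ^ (1/p) :=
    integral_mul_norm_le_Lp_mul_Lq hqp hΦq (Lp.memLp w)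
  -- |∫ inner| ≤ ∫ ‖Φ‖‖w‖
  have habs : |∫ x, ⟪Φ x, w x⟫ ∂μ| ≤ ∫ x, ‖Φ x‖ * ‖w x‖ ∂μ := by
    calc |∫ x, ⟪Φ x, w x⟫ ∂μ| ≤ ∫ x, |⟪Φ x, w x⟫| ∂μ := by
          simpa using norm_integral_le_integral_norm (μ := μ) (fun x => ⟪Φ x, w x⟫)
      _ ≤ ∫ x, ‖Φ x‖ * ‖w x‖ ∂μ := ?_
    refine integral_mono_of_nonneg (Filter.Eventually.of_forall fun x => abs_nonneg _)
      ?_ (Filter.Eventually.of_forall fun x => abs_real_inner_le_norm _ _)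
    · have hexp : (1 : ℝ≥0∞) = 1 / ENNReal.ofReal q + 1 / ENNReal.ofReal p := by
        simp only [one_div]
        rw [← ENNReal.ofReal_inv_of_pos hqp.pos, ← ENNReal.ofReal_inv_of_pos hp0,
          ← ENNReal.ofReal_add (by positivity) (by positivity), ← ENNReal.ofReal_one]
        congr 1
        have h2 := hqp.inv_add_inv_eq_one
        linarith
      exact (memLp_one_iff_integrable.mp
        ((Lp.memLp w).norm.smul hΦq.norm (r := 1) (hpqr := ⟨by rw [inv_one]; simpa only [one_div] using hexp.symm⟩))).congr
        (Filter.Eventually.of_forall fun x => by simp [smul_eq_mul])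
  set C : ℝ := ‖D.comp Ext‖ with hC
  have hC0 : (0:ℝ) ≤ C := hC ▸ (D.comp Ext).opNorm_nonneg
  have hΦint : ∫ x, ‖Φ x‖ ^ q ∂μ = ∫ x, ‖D u x‖ ^ p ∂μ := by
    refine integral_congr_ae (Filter.Eventually.of_forall fun x => ?_)
    show ‖Φ x‖ ^ q = ‖D u x‖ ^ p
    rw [hΦnorm x, ← Real.rpow_mul (norm_nonneg _)]
    congr 1
    rw [hq]; field_simp
  have hA : ∫ x, ‖Φ x‖ ^ q ∂μ ≤ (C * ‖f‖) ^ p := by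
    rw [hΦint]
    calc ∫ x, ‖D u x‖ ^ p ∂μ ≤ ∫ x, ‖D (Ext f) x‖ ^ p ∂μ := hmin (Ext f) (hTE f)
      _ = ‖D (Ext f)‖ ^ p := int_rpow_norm μ p hp _
      _ ≤ (C * ‖f‖) ^ p := by
          refine Real.rpow_le_rpow (norm_nonneg _) ?_ hp0.le
          simpa using (D.comp Ext).le_opNorm f
  have hB : ∫ x, ‖w x‖ ^ p ∂μ ≤ (C * ‖g‖) ^ p := by
    calc ∫ x, ‖w x‖ ^ p ∂μ = ‖w‖ ^ p := int_rpow_norm μ p hp _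
      _ ≤ (C * ‖g‖) ^ p := by
          refine Real.rpow_le_rpow (norm_nonneg _) ?_ hp0.le
          simpa [hw] using (D.comp Ext).le_opNorm g
  have hq0 : (0:ℝ) < q := hqp.pos
  calc |∫ x, ⟪Φ x, w x⟫ ∂μ|
      ≤ ∫ x, ‖Φ x‖ * ‖w x‖ ∂μ := habs
    _ ≤ (∫ x, ‖Φ x‖ ^ q ∂μ) ^ (1/q) * (∫ x, ‖w x‖ ^ p ∂μ) ^ (1/p) := holder
    _ ≤ ((C * ‖f‖) ^ p) ^ (1/q) * ((C * ‖g‖) ^ p) ^ (1/p) := by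
        refine mul_le_mul (Real.rpow_le_rpow (integral_nonneg fun x => by positivity) hA (by positivity))
          (Real.rpow_le_rpow (integral_nonneg fun x => by positivity) hB (by positivity))
          (by positivity) (by positivity)
    _ = (C * ‖f‖) ^ (p - 1) * (C * ‖g‖) := by
        rw [← Real.rpow_mul (by positivity), ← Real.rpow_mul (by positivity)]
        have e1 : p * (1/q) = p - 1 := by rw [hq]; field_simp
        have e2 : p * (1/p) = 1 := by field_simp
        rw [e1, e2, Real.rpow_one]
    _ = C ^ p * ‖f‖ ^ (p - 1) * ‖g‖ := by
        rw [Real.mul_rpow hC0 (norm_nonneg f)]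
        have hCC : C ^ (p-1) * C = C ^ p := by
          nth_rewrite 2 [← Real.rpow_one C]
          rw [← Real.rpow_add_of_nonneg hC0 (by linarith) zero_le_one]
          norm_num
        calc C ^ (p-1) * ‖f‖ ^ (p-1) * (C * ‖g‖)
            = (C ^ (p-1) * C) * (‖f‖ ^ (p-1) * ‖g‖) := by ring
          _ = C ^ p * ‖f‖ ^ (p-1) * ‖g‖ := by rw [hCC]; ring
end

section
/- Let V be a real vector space, E a real Hilbert space, μ a measure on a measurable space α, and p > 1 a real number. Let D : V → L^p(μ;E) be a linear map, and let u₁, u₂ ∈ V satisfy ∫ ⟪Φ_p((Du₁)(x)), (Dv)(x)⟫ dμ(x) = ∫ ⟪Φ_p((Du₂)(x)), (Dv)(x)⟫ dμ(x) for all v ∈ V. Then Du₁ = Du₂ in L^p(μ;E), i.e., (Du₁)(x) = (Du₂)(x) for μ-almost every x. -/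
open MeasureTheory
open scoped RealInnerProductSpace ENNReal

section Aux

variable {E : Type*} [NormedAddCommGroup E] [InnerProductSpace ℝ E]

private lemma rpow_sub_two_mul (p : ℝ) (hp : 1 < p) {r : ℝ} (hr : 0 ≤ r) :
    r ^ (p - 2) * r = r ^ (p - 1) := by
  rcases eq_or_lt_of_le hr with h | h
  · rw [← h, Real.zero_rpow (by intro h'; rw [sub_eq_zero] at h'; linarith : p - 1 ≠ 0), mul_zero]
  · rw [show p - 1 = (p - 2) + 1 by ring, Real.rpow_add_one h.ne']

private lemma inner_phi_sub (p : ℝ) (a b : E) :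
    ⟪(‖a‖ ^ (p - 2)) • a - (‖b‖ ^ (p - 2)) • b, a - b⟫ =
      ‖a‖ ^ (p - 2) * (‖a‖ * ‖a‖) + ‖b‖ ^ (p - 2) * (‖b‖ * ‖b‖)
        - (‖a‖ ^ (p - 2) + ‖b‖ ^ (p - 2)) * ⟪a, b⟫ := by
  simp only [inner_sub_left, inner_sub_right, real_inner_smul_left,
    real_inner_self_eq_norm_mul_norm, real_inner_comm b a]
  ring

private lemma phi_lower (p : ℝ) (hp : 1 < p) (a b : E) :
    (‖a‖ ^ (p - 1) - ‖b‖ ^ (p - 1)) * (‖a‖ - ‖b‖) ≤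
      ⟪(‖a‖ ^ (p - 2)) • a - (‖b‖ ^ (p - 2)) • b, a - b⟫ := by
  rw [inner_phi_sub]
  have hab : ⟪a, b⟫ ≤ ‖a‖ * ‖b‖ := real_inner_le_norm a b
  have hA : (0:ℝ) ≤ ‖a‖ ^ (p - 2) := Real.rpow_nonneg (norm_nonneg a) _
  have hB : (0:ℝ) ≤ ‖b‖ ^ (p - 2) := Real.rpow_nonneg (norm_nonneg b) _
  have h1 := rpow_sub_two_mul p hp (norm_nonneg a)
  have h2 := rpow_sub_two_mul p hp (norm_nonneg b)
  rw [← h1, ← h2]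
  nlinarith [mul_le_mul_of_nonneg_left hab hA, mul_le_mul_of_nonneg_left hab hB]

private lemma diff_mul_nonneg (p : ℝ) (hp : 1 < p) {x y : ℝ} (hx : 0 ≤ x) (hy : 0 ≤ y) :
    0 ≤ (x ^ (p - 1) - y ^ (p - 1)) * (x - y) := by
  rcases le_total x y with h | h
  · have := Real.rpow_le_rpow hx h (by linarith : (0:ℝ) ≤ p - 1)
    nlinarith
  · have := Real.rpow_le_rpow hy h (by linarith : (0:ℝ) ≤ p - 1)
    nlinarith

private lemma phi_inner_nonneg (p : ℝ) (hp : 1 < p) (a b : E) :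
    0 ≤ ⟪(‖a‖ ^ (p - 2)) • a - (‖b‖ ^ (p - 2)) • b, a - b⟫ :=
  le_trans (diff_mul_nonneg p hp (norm_nonneg a) (norm_nonneg b)) (phi_lower p hp a b)

private lemma eq_of_phi_inner_eq_zero (p : ℝ) (hp : 1 < p) {a b : E}
    (h : ⟪(‖a‖ ^ (p - 2)) • a - (‖b‖ ^ (p - 2)) • b, a - b⟫ = 0) : a = b := by
  have hxy : ‖a‖ = ‖b‖ := by
    by_contra hne
    have h1 := phi_lower p hp a b
    rw [h] at h1
    rcases lt_or_gt_of_ne hne with hlt | hlt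
    · have := Real.rpow_lt_rpow (norm_nonneg a) hlt (by linarith : (0:ℝ) < p - 1)
      nlinarith
    · have := Real.rpow_lt_rpow (norm_nonneg b) hlt (by linarith : (0:ℝ) < p - 1)
      nlinarith
  rcases eq_or_lt_of_le (norm_nonneg a) with h0 | h0
  · have ha : a = 0 := norm_eq_zero.mp h0.symm
    have hb : b = 0 := norm_eq_zero.mp (by rw [← hxy]; exact h0.symm)
    rw [ha, hb]
  · have hApos : (0:ℝ) < ‖a‖ ^ (p - 2) := Real.rpow_pos_of_pos h0 _
    have hid := inner_phi_sub p a b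
    rw [h] at hid
    have hip : ⟪a, b⟫ = ‖a‖ * ‖b‖ := by
      rw [← hxy] at hid ⊢
      nlinarith
    have hz : ‖a - b‖ * ‖a - b‖ = 0 := by
      rw [← real_inner_self_eq_norm_mul_norm]
      simp only [inner_sub_left, inner_sub_right, real_inner_self_eq_norm_mul_norm,
        real_inner_comm b a]
      rw [real_inner_comm a b, hip, hxy]
      ring
    have : a - b = 0 := by
      have := mul_self_eq_zero.mp hz
      exact norm_eq_zero.mp this
    exact sub_eq_zero.mp this

private lemma integrable_inner_conj {α : Type*} [MeasurableSpace α] {μ : Measure α}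
    {p : ℝ} (hp : 1 < p) {f g : α → E}
    (hf : MemLp f (ENNReal.ofReal (p / (p - 1))) μ) (hg : MemLp g (ENNReal.ofReal p) μ) :
    Integrable (fun x => ⟪f x, g x⟫) μ := by
  rw [← memLp_one_iff_integrable]
  refine ⟨hf.1.inner hg.1, ?_⟩
  have hconj : (p / (p - 1)).HolderConjugate p :=
    (Real.HolderConjugate.conjExponent hp).symm
  calc eLpNorm (fun x => ⟪f x, g x⟫) 1 μ
      ≤ eLpNorm f (ENNReal.ofReal (p / (p - 1))) μ * eLpNorm g (ENNReal.ofReal p) μ := by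
        haveI : ENNReal.HolderTriple (ENNReal.ofReal (p / (p - 1))) (ENNReal.ofReal p) 1 :=
          ⟨by rw [inv_one]; exact hconj.inv_add_inv_ennreal⟩
        have := eLpNorm_le_eLpNorm_mul_eLpNorm'_of_norm (p := ENNReal.ofReal (p / (p - 1)))
          (q := ENNReal.ofReal p) (r := 1) hf.1 hg.1
          (fun u v => ⟪u, v⟫) 1 (Filter.Eventually.of_forall fun x => by
            rw [NNReal.coe_one, one_mul]; exact norm_inner_le_norm _ _)
        rwa [ENNReal.coe_one, one_mul] at this
    _ < ∞ := ENNReal.mul_lt_top hf.2 hg.2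

private lemma memℒp_phi {α : Type*} [MeasurableSpace α] {μ : Measure α}
    {p : ℝ} (hp : 1 < p) {f : α → E} (hf : MemLp f (ENNReal.ofReal p) μ) :
    MemLp (fun x => (‖f x‖ ^ (p - 2)) • f x) (ENNReal.ofReal (p / (p - 1))) μ := by
  have hmeas : AEStronglyMeasurable (fun x => (‖f x‖ ^ (p - 2)) • f x) μ := by
    refine AEStronglyMeasurable.smul ?_ hf.1
    exact (hf.1.norm.aemeasurable.pow_const (p - 2)).aestronglyMeasurable
  refine ⟨hmeas, ?_⟩
  have hnorm : ∀ x, ‖(‖f x‖ ^ (p - 2)) • f x‖ = ‖(fun y => ‖f y‖ ^ (p - 1)) x‖ := by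
    intro x
    rw [norm_smul, Real.norm_of_nonneg (Real.rpow_nonneg (norm_nonneg _) _),
      rpow_sub_two_mul p hp (norm_nonneg _),
      Real.norm_of_nonneg (Real.rpow_nonneg (norm_nonneg _) _)]
  rw [eLpNorm_congr_norm_ae (Filter.Eventually.of_forall hnorm)]
  rw [eLpNorm_norm_rpow f (by linarith : (0:ℝ) < p - 1)]
  have hmul : ENNReal.ofReal (p / (p - 1)) * ENNReal.ofReal (p - 1) = ENNReal.ofReal p := by
    rw [← ENNReal.ofReal_mul (le_of_lt (div_pos (by linarith) (by linarith)) : (0:ℝ) ≤ p / (p - 1))]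
    congr 1
    exact div_mul_cancel₀ p (ne_of_gt (by linarith : (0:ℝ) < p - 1))
  rw [hmul]
  exact ENNReal.rpow_lt_top_of_nonneg (by linarith : (0:ℝ) ≤ p - 1) hf.2.ne

end Aux

/-- Injectivity step of Theorem 4.5: if `u₁`, `u₂` induce the same functional
`v ↦ ∫ ⟪‖Duᵢ‖^{p−2}·Duᵢ, Dv⟫ dμ`, then `Du₁ = Du₂` in `L^p(μ;E)`, i.e. μ-a.e. -/
theorem gradients_agree_of_equal_functionals
    {V : Type*} [AddCommGroup V] [Module ℝ V]
    {E : Type*} [NormedAddCommGroup E] [InnerProductSpace ℝ E] [CompleteSpace E]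
    {α : Type*} [MeasurableSpace α] (μ : Measure α)
    (p : ℝ) (hp : 1 < p) [Fact (1 ≤ ENNReal.ofReal p)]
    (D : V →ₗ[ℝ] Lp E (ENNReal.ofReal p) μ)
    (u₁ u₂ : V)
    (h : ∀ v : V, (∫ x, ⟪(‖D u₁ x‖ ^ (p - 2)) • D u₁ x, D v x⟫ ∂μ) =
      ∫ x, ⟪(‖D u₂ x‖ ^ (p - 2)) • D u₂ x, D v x⟫ ∂μ) :
    D u₁ = D u₂ ∧ ∀ᵐ x ∂μ, D u₁ x = D u₂ x := by
  have ha : MemLp (⇑(D u₁)) (ENNReal.ofReal p) μ := Lp.memLp _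
  have hb : MemLp (⇑(D u₂)) (ENNReal.ofReal p) μ := Lp.memLp _
  have hw : MemLp (fun x => D u₁ x - D u₂ x) (ENNReal.ofReal p) μ := ha.sub hb
  have hΦ₁ := memℒp_phi hp ha
  have hΦ₂ := memℒp_phi hp hb
  have hint₁ : Integrable (fun x => ⟪(‖D u₁ x‖ ^ (p - 2)) • D u₁ x, D u₁ x - D u₂ x⟫) μ :=
    integrable_inner_conj hp hΦ₁ hw
  have hint₂ : Integrable (fun x => ⟪(‖D u₂ x‖ ^ (p - 2)) • D u₂ x, D u₁ x - D u₂ x⟫) μ :=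
    integrable_inner_conj hp hΦ₂ hw
  -- rewrite the hypothesis at v = u₁ - u₂
  have hDv : ⇑(D (u₁ - u₂)) =ᵐ[μ] fun x => D u₁ x - D u₂ x := by
    rw [map_sub]; exact Lp.coeFn_sub _ _
  have key := h (u₁ - u₂)
  have e₁ : (∫ x, ⟪(‖D u₁ x‖ ^ (p - 2)) • D u₁ x, D (u₁ - u₂) x⟫ ∂μ) =
      ∫ x, ⟪(‖D u₁ x‖ ^ (p - 2)) • D u₁ x, D u₁ x - D u₂ x⟫ ∂μ :=
    integral_congr_ae (hDv.mono fun x hx => by dsimp only; rw [hx])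
  have e₂ : (∫ x, ⟪(‖D u₂ x‖ ^ (p - 2)) • D u₂ x, D (u₁ - u₂) x⟫ ∂μ) =
      ∫ x, ⟪(‖D u₂ x‖ ^ (p - 2)) • D u₂ x, D u₁ x - D u₂ x⟫ ∂μ :=
    integral_congr_ae (hDv.mono fun x hx => by dsimp only; rw [hx])
  rw [e₁, e₂] at key
  -- the nonnegative integrand
  set g : α → ℝ := fun x =>
    ⟪(‖D u₁ x‖ ^ (p - 2)) • D u₁ x - (‖D u₂ x‖ ^ (p - 2)) • D u₂ x, D u₁ x - D u₂ x⟫ with hg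
  have hg_eq : ∀ x, g x = ⟪(‖D u₁ x‖ ^ (p - 2)) • D u₁ x, D u₁ x - D u₂ x⟫ -
      ⟪(‖D u₂ x‖ ^ (p - 2)) • D u₂ x, D u₁ x - D u₂ x⟫ := fun x => by
    simp only [hg, inner_sub_left]
  have hg_int : Integrable g μ := by
    refine (hint₁.sub hint₂).congr (Filter.Eventually.of_forall fun x => (hg_eq x).symm)
  have hg_nonneg : ∀ x, 0 ≤ g x := fun x => phi_inner_nonneg p hp _ _
  have hg_integral : ∫ x, g x ∂μ = 0 := by
    calc ∫ x, g x ∂μ = (∫ x, ⟪(‖D u₁ x‖ ^ (p - 2)) • D u₁ x, D u₁ x - D u₂ x⟫ ∂μ) -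
        ∫ x, ⟪(‖D u₂ x‖ ^ (p - 2)) • D u₂ x, D u₁ x - D u₂ x⟫ ∂μ := by
          rw [← integral_sub hint₁ hint₂]
          exact integral_congr_ae (Filter.Eventually.of_forall hg_eq)
      _ = 0 := by rw [key, sub_self]
  have hg_zero : g =ᵐ[μ] 0 :=
    (integral_eq_zero_iff_of_nonneg hg_nonneg hg_int).mp hg_integral
  have hae : ∀ᵐ x ∂μ, D u₁ x = D u₂ x := by
    filter_upwards [hg_zero] with x hx
    exact eq_of_phi_inner_eq_zero p hp hx
  exact ⟨Lp.ext hae, hae⟩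
end

section
/- Let E be a real Hilbert space, μ a measure on a measurable space α, and p > 1 a real number. Let W be a linear subspace of L^p(μ;E) and F ∈ L^p(μ;E). Then ∫ ‖F(x)‖^p dμ(x) ≤ ∫ ‖F(x) + H(x)‖^p dμ(x) for all H ∈ W if and only if ∫ ⟪Φ_p(F(x)), H(x)⟫ dμ(x) = 0 for all H ∈ W. -/
open MeasureTheory
open scoped RealInnerProductSpace ENNReal

section Helpers

variable {E : Type*} [NormedAddCommGroup E] [InnerProductSpace ℝ E]

/-- Norm of `Φ_p(a)`. -/
lemma phi_norm_eq {p : ℝ} (hp : 1 < p) (a : E) :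
    ‖(‖a‖ ^ (p - 2)) • a‖ = ‖a‖ ^ (p - 1) := by
  rcases eq_or_ne a 0 with rfl | ha
  · simp [Real.zero_rpow (by linarith : p - 1 ≠ 0)]
  · have hs : ‖a‖ ≠ 0 := norm_ne_zero_iff.2 ha
    rw [norm_smul, Real.norm_eq_abs, abs_of_nonneg (Real.rpow_nonneg (norm_nonneg a) _)]
    have : p - 1 = (p - 2) + 1 := by ring
    rw [this, Real.rpow_add_one hs]

/-- Continuity of `Φ_p`. -/
lemma phi_continuous {p : ℝ} (hp : 1 < p) :
    Continuous fun a : E => (‖a‖ ^ (p - 2)) • a := by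
  rw [continuous_iff_continuousAt]
  intro a
  rcases eq_or_ne a 0 with rfl | ha
  · have h0 : ((‖(0 : E)‖ ^ (p - 2)) • (0 : E)) = 0 := by simp
    rw [ContinuousAt, h0, tendsto_zero_iff_norm_tendsto_zero]
    have hb : ∀ b : E, ‖(‖b‖ ^ (p - 2)) • b‖ = ‖b‖ ^ (p - 1) := fun b => phi_norm_eq hp b
    simp only [hb]
    have hc : ContinuousAt (fun x : ℝ => x ^ (p - 1)) 0 :=
      Real.continuousAt_rpow_const 0 (p - 1) (Or.inr (by linarith))
    have hc' : Filter.Tendsto (fun x : ℝ => x ^ (p - 1)) (nhds 0) (nhds 0) := by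
      have := hc.tendsto
      rwa [Real.zero_rpow (by linarith : p - 1 ≠ 0)] at this
    have hn : Filter.Tendsto (fun b : E => ‖b‖) (nhds 0) (nhds (0 : ℝ)) := by
      simpa using continuous_norm.tendsto (0 : E)
    exact hc'.comp hn
  · exact ((continuous_norm.continuousAt.rpow_const
      (Or.inl (norm_ne_zero_iff.2 ha))).smul continuousAt_id)

/-- Tangent-line (subgradient) inequality for `‖·‖^p`. -/
lemma phi_tangent {p : ℝ} (hp : 1 < p) (a b : E) :
    ‖a‖ ^ p + p * ⟪(‖a‖ ^ (p - 2)) • a, b⟫ ≤ ‖a + b‖ ^ p := by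
  rcases eq_or_ne a 0 with rfl | ha
  · simp [Real.zero_rpow (by linarith : p ≠ 0), Real.rpow_nonneg (norm_nonneg b) p]
  set s := ‖a‖ with hs_def
  set t := ‖a + b‖ with ht_def
  have hs : 0 < s := norm_pos_iff.2 ha
  have ht0 : 0 ≤ t := norm_nonneg _
  have hib : ⟪a, b⟫ ≤ s * t - s * s := by
    have h1 : ⟪a, a + b⟫ = ⟪a, a⟫ + ⟪a, b⟫ := inner_add_right a a b
    have h2 : ⟪a, a + b⟫ ≤ s * t := real_inner_le_norm a (a + b)
    have h3 : ⟪a, a⟫ = s * s := real_inner_self_eq_norm_mul_norm a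
    linarith
  have hinner : ⟪(‖a‖ ^ (p - 2)) • a, b⟫ = s ^ (p - 2) * ⟪a, b⟫ :=
    real_inner_smul_left a b _
  have hsp2 : (0 : ℝ) ≤ s ^ (p - 2) := Real.rpow_nonneg hs.le _
  have hsp1s : s ^ (p - 2) * s = s ^ (p - 1) := by
    have : p - 1 = (p - 2) + 1 := by ring
    rw [this, Real.rpow_add_one hs.ne']
  have hsps : s ^ (p - 1) * s = s ^ p := by
    have : p = (p - 1) + 1 := by ring
    rw [this, Real.rpow_add_one hs.ne']; ring_nf
  -- key Bernoulli step : s^p + p * (s^(p-1) * t - s^p) ≤ t^p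
  have key : s ^ p + p * (s ^ (p - 1) * t - s ^ p) ≤ t ^ p := by
    have hz : -1 ≤ t / s - 1 := by
      have : 0 ≤ t / s := div_nonneg ht0 hs.le
      linarith
    have hb := one_add_mul_self_le_rpow_one_add hz hp.le
    have h1z : (1 : ℝ) + (t / s - 1) = t / s := by ring
    rw [h1z] at hb
    have hspos : 0 < s ^ p := Real.rpow_pos_of_pos hs p
    have hmul := mul_le_mul_of_nonneg_left hb hspos.le
    have hrhs : s ^ p * (t / s) ^ p = t ^ p := by
      rw [Real.div_rpow ht0 hs.le, mul_comm, div_mul_cancel₀ _ hspos.ne']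
    have hlhs : s ^ p * (1 + p * (t / s - 1)) = s ^ p + p * (s ^ (p - 1) * t - s ^ p) := by
      have h4 : s ^ p * (t / s) = s ^ (p - 1) * t := by
        rw [← hsps]; field_simp
      have : s ^ p * (1 + p * (t / s - 1)) = s ^ p + p * (s ^ p * (t / s) - s ^ p) := by ring
      rw [this, h4]
    rw [hrhs, hlhs] at hmul
    exact hmul
  have step : p * ⟪(‖a‖ ^ (p - 2)) • a, b⟫ ≤ p * (s ^ (p - 1) * t - s ^ p) := by
    rw [hinner]
    have h5 : s ^ (p - 2) * ⟪a, b⟫ ≤ s ^ (p - 2) * (s * t - s * s) :=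
      mul_le_mul_of_nonneg_left hib hsp2
    have h6 : s ^ (p - 2) * (s * t - s * s) = s ^ (p - 1) * t - s ^ p := by
      have : s ^ (p - 2) * (s * t - s * s) = (s ^ (p - 2) * s) * t - (s ^ (p - 2) * s) * s := by
        ring
      rw [this, hsp1s, hsps]
    rw [← h6]
    exact mul_le_mul_of_nonneg_left h5 (by linarith : (0:ℝ) ≤ p)
  linarith

end Helpers

section Integrability

variable {E : Type*} [NormedAddCommGroup E] [InnerProductSpace ℝ E]
  {α : Type*} [MeasurableSpace α] {μ : Measure α}

/-- Hölder: if `f ∈ L^p` and `H ∈ L^p` then `‖f‖^(p-1) * ‖H‖` is integrable. -/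
lemma integrable_rpow_mul {p : ℝ} (hp : 1 < p) {f : α → ℝ} {H : α → E}
    (hf : MemLp f (ENNReal.ofReal p) μ) (hH : MemLp H (ENNReal.ofReal p) μ) :
    Integrable (fun x => ‖f x‖ ^ (p - 1) * ‖H x‖) μ := by
  have hp0 : 0 < p := by linarith
  have hq := hf.norm_rpow_div (ENNReal.ofReal (p - 1))
  rw [ENNReal.toReal_ofReal (by linarith : (0:ℝ) ≤ p - 1)] at hq
  have hHn : MemLp (fun x => ‖H x‖) (ENNReal.ofReal p) μ := hH.norm
  have harith : (1 : ℝ≥0∞) / 1 =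
      1 / (ENNReal.ofReal p / ENNReal.ofReal (p - 1)) + 1 / ENNReal.ofReal p := by
    have hpne : ENNReal.ofReal p ≠ 0 := by
      simp [ENNReal.ofReal_eq_zero]; linarith
    have hpnetop : ENNReal.ofReal p ≠ ∞ := ENNReal.ofReal_ne_top
    have hp1ne : ENNReal.ofReal (p - 1) ≠ 0 := by
      simp [ENNReal.ofReal_eq_zero]; linarith
    have hp1netop : ENNReal.ofReal (p - 1) ≠ ∞ := ENNReal.ofReal_ne_top
    rw [one_div (ENNReal.ofReal p / ENNReal.ofReal (p - 1)),
      ENNReal.inv_div (Or.inl hp1netop) (Or.inl hp1ne), one_div,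
      ENNReal.div_add_div_same]
    have : ENNReal.ofReal (p - 1) + 1 = ENNReal.ofReal p := by
      rw [← ENNReal.ofReal_one, ← ENNReal.ofReal_add (by linarith) zero_le_one]
      norm_num
    rw [this, ENNReal.div_self hpne hpnetop]
    simp
  have := hHn.smul (φ := fun x => ‖f x‖ ^ (p - 1)) hq
    (hpqr := ⟨by simpa only [one_div] using harith.symm⟩)
  rw [memLp_one_iff_integrable] at this
  exact this

/-- Integrability of `⟪Φ_p(G), H⟫`. -/
lemma integrable_inner_phi {p : ℝ} (hp : 1 < p) {G H : α → E}
    (hG : MemLp G (ENNReal.ofReal p) μ) (hH : MemLp H (ENNReal.ofReal p) μ) :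
    Integrable (fun x => ⟪(‖G x‖ ^ (p - 2)) • G x, H x⟫) μ := by
  have hbound := integrable_rpow_mul hp (f := fun x => ‖G x‖) hG.norm hH
  refine hbound.mono' ?_ ?_
  · exact ((phi_continuous hp).comp_aestronglyMeasurable
      hG.aestronglyMeasurable).inner hH.aestronglyMeasurable
  · filter_upwards with x
    calc ‖⟪(‖G x‖ ^ (p - 2)) • G x, H x⟫‖
        ≤ ‖(‖G x‖ ^ (p - 2)) • G x‖ * ‖H x‖ := norm_inner_le_norm _ _
      _ = ‖G x‖ ^ (p - 1) * ‖H x‖ := by rw [phi_norm_eq hp]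
      _ ≤ ‖‖G x‖‖ ^ (p - 1) * ‖H x‖ := by rw [norm_norm]

end Integrability

/-- Variational characterization of `p`-harmonicity: `F` minimizes the `p`-energy among
perturbations by elements of the subspace `W` if and only if
`∫ ⟪Φ_p(F), H⟫ dμ = 0` for every `H ∈ W`. -/
theorem pEnergy_min_iff_weak_pLaplace
    {E : Type*} [NormedAddCommGroup E] [InnerProductSpace ℝ E] [CompleteSpace E]
    {α : Type*} [MeasurableSpace α] (μ : Measure α)
    (p : ℝ) (hp : 1 < p) [Fact (1 ≤ ENNReal.ofReal p)]
    (W : Submodule ℝ (Lp E (ENNReal.ofReal p) μ))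
    (F : Lp E (ENNReal.ofReal p) μ) :
    (∀ H ∈ W, (∫ x, ‖F x‖ ^ p ∂μ) ≤ ∫ x, ‖F x + H x‖ ^ p ∂μ) ↔
      ∀ H ∈ W, (∫ x, ⟪(‖F x‖ ^ (p - 2)) • F x, H x⟫ ∂μ) = 0 := by
  have hp0 : 0 < p := by linarith
  have hPne : (ENNReal.ofReal p) ≠ 0 := by simp [ENNReal.ofReal_eq_zero]; linarith
  have hPnetop : (ENNReal.ofReal p) ≠ ∞ := ENNReal.ofReal_ne_top
  have hPto : (ENNReal.ofReal p).toReal = p := ENNReal.toReal_ofReal hp0.le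
  have hF : MemLp (fun x => F x) (ENNReal.ofReal p) μ := Lp.memLp F
  have hFint : Integrable (fun x => ‖F x‖ ^ p) μ := by
    have := hF.integrable_norm_rpow hPne hPnetop
    rwa [hPto] at this
  -- integrability of ‖F + G‖^p for Lp elements
  have hsum_int : ∀ G : Lp E (ENNReal.ofReal p) μ,
      Integrable (fun x => ‖F x + G x‖ ^ p) μ := by
    intro G
    have h1 := (Lp.memLp (F + G)).integrable_norm_rpow hPne hPnetop
    rw [hPto] at h1
    refine h1.congr ?_
    filter_upwards [Lp.coeFn_add F G] with x hx
    rw [hx]; rfl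
  constructor
  · -- minimality → weak equation
    intro hmin H hH
    have hHmem : MemLp (fun x => H x) (ENNReal.ofReal p) μ := Lp.memLp H
    set J : ℝ → ℝ := fun t => ∫ x, ⟪(‖F x + t • H x‖ ^ (p - 2)) • (F x + t • H x), H x⟫ ∂μ
      with hJ_def
    -- sign condition
    have hsign : ∀ t : ℝ, 0 ≤ p * t * J t := by
      intro t
      have hGt : MemLp (fun x => F x + t • H x) (ENNReal.ofReal p) μ :=
        hF.add (hHmem.const_smul t)
      have hint_inner : Integrable
          (fun x => ⟪(‖F x + t • H x‖ ^ (p - 2)) • (F x + t • H x), H x⟫) μ :=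
        integrable_inner_phi hp hGt hHmem
      have hint_norm : Integrable (fun x => ‖F x + t • H x‖ ^ p) μ := by
        have h1 := (hsum_int (t • H))
        refine h1.congr ?_
        filter_upwards [Lp.coeFn_smul t H] with x hx
        rw [hx]; rfl
      -- pointwise tangent inequality at F + tH in direction -(tH)
      have ptw : ∀ x, ‖F x + t • H x‖ ^ p ≤ ‖F x‖ ^ p +
          (p * t) * ⟪(‖F x + t • H x‖ ^ (p - 2)) • (F x + t • H x), H x⟫ := by
        intro x
        have := phi_tangent hp (F x + t • H x) (-(t • H x))
        rw [add_neg_cancel_right] at this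
        rw [inner_neg_right, inner_smul_right] at this
        nlinarith [this]
      have hle1 : (∫ x, ‖F x + t • H x‖ ^ p ∂μ) ≤
          ∫ x, (‖F x‖ ^ p + (p * t) * ⟪(‖F x + t • H x‖ ^ (p - 2)) •
            (F x + t • H x), H x⟫) ∂μ :=
        integral_mono hint_norm (hFint.add (hint_inner.const_mul (p * t))) ptw
      rw [integral_add hFint (hint_inner.const_mul (p * t)),
        integral_const_mul] at hle1
      have hmin' : (∫ x, ‖F x‖ ^ p ∂μ) ≤ ∫ x, ‖F x + t • H x‖ ^ p ∂μ := by
        have h2 := hmin (t • H) (W.smul_mem t hH)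
        have h3 : (∫ x, ‖F x + (t • H) x‖ ^ p ∂μ) = ∫ x, ‖F x + t • H x‖ ^ p ∂μ := by
          refine integral_congr_ae ?_
          filter_upwards [Lp.coeFn_smul t H] with x hx
          rw [hx]; rfl
        linarith
      simp only [hJ_def]
      linarith
    -- continuity of J at 0
    have hcont : ContinuousAt J 0 := by
      have hbound_int : Integrable (fun x => ‖(‖F x‖ + ‖H x‖)‖ ^ (p - 1) * ‖H x‖) μ :=
        integrable_rpow_mul hp (hF.norm.add hHmem.norm) hHmem
      refine continuousAt_of_dominated ?_ ?_ hbound_int ?_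
      · filter_upwards with t
        exact ((phi_continuous hp).comp_aestronglyMeasurable
          (hF.aestronglyMeasurable.add
            (hHmem.aestronglyMeasurable.const_smul t))).inner hHmem.aestronglyMeasurable
      · have h1 : ∀ᶠ t : ℝ in nhds 0, |t| ≤ 1 := by
          have := Metric.closedBall_mem_nhds (0 : ℝ) one_pos
          filter_upwards [this] with t ht
          simpa [Real.dist_eq] using ht
        filter_upwards [h1] with t ht
        filter_upwards with x
        have hnle : ‖F x + t • H x‖ ≤ ‖F x‖ + ‖H x‖ := by
          calc ‖F x + t • H x‖ ≤ ‖F x‖ + ‖t • H x‖ := norm_add_le _ _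
            _ = ‖F x‖ + |t| * ‖H x‖ := by rw [norm_smul, Real.norm_eq_abs]
            _ ≤ ‖F x‖ + 1 * ‖H x‖ := by
                have := mul_le_mul_of_nonneg_right ht (norm_nonneg (H x))
                linarith
            _ = ‖F x‖ + ‖H x‖ := by ring
        calc ‖⟪(‖F x + t • H x‖ ^ (p - 2)) • (F x + t • H x), H x⟫‖
            ≤ ‖(‖F x + t • H x‖ ^ (p - 2)) • (F x + t • H x)‖ * ‖H x‖ :=
              norm_inner_le_norm _ _
          _ = ‖F x + t • H x‖ ^ (p - 1) * ‖H x‖ := by rw [phi_norm_eq hp]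
          _ ≤ ‖(‖F x‖ + ‖H x‖)‖ ^ (p - 1) * ‖H x‖ := by
              refine mul_le_mul_of_nonneg_right ?_ (norm_nonneg _)
              rw [Real.norm_eq_abs, abs_of_nonneg (by positivity)]
              exact Real.rpow_le_rpow (norm_nonneg _) hnle (by linarith)
      · filter_upwards with x
        have : Continuous fun t : ℝ =>
            ⟪(‖F x + t • H x‖ ^ (p - 2)) • (F x + t • H x), H x⟫ := by
          have haff : Continuous fun t : ℝ => F x + t • H x :=
            continuous_const.add (continuous_id.smul continuous_const)
          exact ((phi_continuous hp).comp haff).inner continuous_const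
        exact this.continuousAt
    -- conclude J 0 = 0
    have hJ0_eq : J 0 = ∫ x, ⟪(‖F x‖ ^ (p - 2)) • F x, H x⟫ ∂μ := by
      simp [hJ_def]
    have hge : 0 ≤ J 0 := by
      have htend : Filter.Tendsto J (nhdsWithin 0 (Set.Ioi 0)) (nhds (J 0)) :=
        hcont.tendsto.mono_left nhdsWithin_le_nhds
      refine ge_of_tendsto htend ?_
      filter_upwards [self_mem_nhdsWithin] with t ht
      have hpt : 0 < p * t := mul_pos hp0 ht
      have := hsign t
      exact (mul_nonneg_iff_of_pos_left hpt).mp this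
    have hle : J 0 ≤ 0 := by
      have htend : Filter.Tendsto J (nhdsWithin 0 (Set.Iio 0)) (nhds (J 0)) :=
        hcont.tendsto.mono_left nhdsWithin_le_nhds
      refine le_of_tendsto htend ?_
      filter_upwards [self_mem_nhdsWithin] with t ht
      have hpt : p * t < 0 := mul_neg_of_pos_of_neg hp0 ht
      nlinarith [hsign t]
    rw [← hJ0_eq]
    linarith
  · -- weak equation → minimality
    intro hweak H hH
    have hHmem : MemLp (fun x => H x) (ENNReal.ofReal p) μ := Lp.memLp H
    have hint_inner : Integrable (fun x => ⟪(‖F x‖ ^ (p - 2)) • F x, H x⟫) μ :=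
      integrable_inner_phi hp hF hHmem
    have ptw : ∀ x, ‖F x‖ ^ p + p * ⟪(‖F x‖ ^ (p - 2)) • F x, H x⟫ ≤
        ‖F x + H x‖ ^ p := fun x => phi_tangent hp (F x) (H x)
    have hle : (∫ x, (‖F x‖ ^ p + p * ⟪(‖F x‖ ^ (p - 2)) • F x, H x⟫) ∂μ) ≤
        ∫ x, ‖F x + H x‖ ^ p ∂μ :=
      integral_mono (hFint.add (hint_inner.const_mul p)) (hsum_int H) ptw
    rw [integral_add hFint (hint_inner.const_mul p), integral_const_mul,
      hweak H hH, mul_zero, add_zero] at hle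
    exact hle
end

section
/- Let E be a real inner product space and p > 1 a real number. For all a, b ∈ E, ⟪Φ_p(a) − Φ_p(b), a − b⟫ ≥ 0, and equality holds if and only if a = b. -/
open scoped RealInnerProductSpace

private lemma rpow_mul_self_aux {t q : ℝ} (ht : 0 ≤ t) (hq : q + 1 ≠ 0) :
    t ^ q * t = t ^ (q + 1) := by
  rcases eq_or_lt_of_le ht with h | h
  · rw [← h, Real.zero_rpow hq, mul_zero]
  · rw [Real.rpow_add h, Real.rpow_one]

private lemma rpow_sq_aux {p t : ℝ} (hp : 1 < p) (ht : 0 ≤ t) :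
    t ^ (p - 2) * t ^ 2 = t ^ p := by
  have h1 : t ^ (p - 2) * t = t ^ (p - 2 + 1) := rpow_mul_self_aux ht (by linarith)
  have h2 : t ^ (p - 2 + 1) * t = t ^ (p - 2 + 1 + 1) :=
    rpow_mul_self_aux ht (by intro h; nlinarith)
  have : p - 2 + 1 + 1 = p := by ring
  rw [sq, ← mul_assoc, h1, h2, this]

/-- Pointwise strict monotonicity of the `p`-Laplacian vector field `Φ_p(a) = ‖a‖^{p−2}·a`:
`⟪Φ_p(a) − Φ_p(b), a − b⟫ ≥ 0`, with equality if and only if `a = b`. -/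
theorem pLaplace_field_strictMono
    {E : Type*} [NormedAddCommGroup E] [InnerProductSpace ℝ E]
    (p : ℝ) (hp : 1 < p) (a b : E) :
    0 ≤ ⟪(‖a‖ ^ (p - 2)) • a - (‖b‖ ^ (p - 2)) • b, a - b⟫ ∧
      (⟪(‖a‖ ^ (p - 2)) • a - (‖b‖ ^ (p - 2)) • b, a - b⟫ = 0 ↔ a = b) := by
  have hA : (0:ℝ) ≤ ‖a‖ := norm_nonneg a
  have hB : (0:ℝ) ≤ ‖b‖ := norm_nonneg b
  have key : ⟪(‖a‖ ^ (p - 2)) • a - (‖b‖ ^ (p - 2)) • b, a - b⟫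
      = ‖a‖ ^ p + ‖b‖ ^ p - (‖a‖ ^ (p - 2) + ‖b‖ ^ (p - 2)) * ⟪a, b⟫ := by
    rw [inner_sub_left, inner_sub_right, inner_sub_right,
        real_inner_smul_left, real_inner_smul_left, real_inner_smul_left, real_inner_smul_left,
        real_inner_self_eq_norm_sq, real_inner_self_eq_norm_sq, real_inner_comm b a,
        ← rpow_sq_aux hp hA, ← rpow_sq_aux hp hB]
    ring
  have hab : ⟪a, b⟫ ≤ ‖a‖ * ‖b‖ := real_inner_le_norm a b
  have hcoef : 0 ≤ ‖a‖ ^ (p - 2) + ‖b‖ ^ (p - 2) :=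
    add_nonneg (Real.rpow_nonneg hA _) (Real.rpow_nonneg hB _)
  have ea1 : ‖a‖ ^ (p - 2) * ‖a‖ = ‖a‖ ^ (p - 1) := by
    rw [rpow_mul_self_aux hA (by linarith : p - 2 + 1 ≠ 0), show p - 2 + 1 = p - 1 by ring]
  have eb1 : ‖b‖ ^ (p - 2) * ‖b‖ = ‖b‖ ^ (p - 1) := by
    rw [rpow_mul_self_aux hB (by linarith : p - 2 + 1 ≠ 0), show p - 2 + 1 = p - 1 by ring]
  have ea2 : ‖a‖ ^ (p - 1) * ‖a‖ = ‖a‖ ^ p := by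
    rw [rpow_mul_self_aux hA (by linarith : p - 1 + 1 ≠ 0), show p - 1 + 1 = p by ring]
  have eb2 : ‖b‖ ^ (p - 1) * ‖b‖ = ‖b‖ ^ p := by
    rw [rpow_mul_self_aux hB (by linarith : p - 1 + 1 ≠ 0), show p - 1 + 1 = p by ring]
  have hgid : ‖a‖ ^ p + ‖b‖ ^ p - (‖a‖ ^ (p - 2) + ‖b‖ ^ (p - 2)) * (‖a‖ * ‖b‖)
      = (‖a‖ ^ (p - 1) - ‖b‖ ^ (p - 1)) * (‖a‖ - ‖b‖) := by
    rw [← ea2, ← eb2, ← ea1, ← eb1]; ring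
  have hg : 0 ≤ (‖a‖ ^ (p - 1) - ‖b‖ ^ (p - 1)) * (‖a‖ - ‖b‖) := by
    rcases le_total ‖a‖ ‖b‖ with h | h
    · have := Real.rpow_le_rpow hA h (by linarith : (0:ℝ) ≤ p - 1)
      nlinarith
    · have := Real.rpow_le_rpow hB h (by linarith : (0:ℝ) ≤ p - 1)
      exact mul_nonneg (by linarith) (by linarith)
  have hcs : (‖a‖ ^ (p - 2) + ‖b‖ ^ (p - 2)) * ⟪a, b⟫
      ≤ (‖a‖ ^ (p - 2) + ‖b‖ ^ (p - 2)) * (‖a‖ * ‖b‖) :=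
    mul_le_mul_of_nonneg_left hab hcoef
  have hineq : 0 ≤ ⟪(‖a‖ ^ (p - 2)) • a - (‖b‖ ^ (p - 2)) • b, a - b⟫ := by
    rw [key]; linarith
  refine ⟨hineq, ?_, ?_⟩
  · intro h
    rw [key] at h
    -- equality forces both: g = 0 and c * s = c * αβ
    have hg0 : (‖a‖ ^ (p - 1) - ‖b‖ ^ (p - 1)) * (‖a‖ - ‖b‖) = 0 := by linarith
    have hcseq : (‖a‖ ^ (p - 2) + ‖b‖ ^ (p - 2)) * ⟪a, b⟫
        = (‖a‖ ^ (p - 2) + ‖b‖ ^ (p - 2)) * (‖a‖ * ‖b‖) := by linarith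
    rcases eq_or_ne a 0 with ha | ha
    · -- a = 0 : show b = 0
      subst ha
      have h0 : ⟪(0:E), b⟫ = 0 := inner_zero_left b
      have hnp : ‖b‖ ^ p = 0 := by
        have : ‖(0:E)‖ ^ p = 0 := by
          rw [norm_zero]; exact Real.zero_rpow (by linarith)
        rw [h0, mul_zero] at h; linarith
      have : ‖b‖ = 0 := by
        by_contra hb0
        have hbpos : 0 < ‖b‖ := lt_of_le_of_ne hB (Ne.symm hb0)
        exact absurd hnp (ne_of_gt (Real.rpow_pos_of_pos hbpos p))
      exact (norm_eq_zero.mp this).symm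
    rcases eq_or_ne b 0 with hb | hb
    · subst hb
      exfalso
      have h0 : ⟪a, (0:E)⟫ = 0 := inner_zero_right a
      have hnp : ‖a‖ ^ p = 0 := by
        have : ‖(0:E)‖ ^ p = 0 := by
          rw [norm_zero]; exact Real.zero_rpow (by linarith)
        rw [h0, mul_zero] at h; linarith
      have hapos : 0 < ‖a‖ := norm_pos_iff.mpr ha
      exact absurd hnp (ne_of_gt (Real.rpow_pos_of_pos hapos p))
    · -- both nonzero
      have hapos : 0 < ‖a‖ := norm_pos_iff.mpr ha
      have hbpos : 0 < ‖b‖ := norm_pos_iff.mpr hb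
      have hcpos : 0 < ‖a‖ ^ (p - 2) + ‖b‖ ^ (p - 2) :=
        add_pos (Real.rpow_pos_of_pos hapos _) (Real.rpow_pos_of_pos hbpos _)
      have hseq : ⟪a, b⟫ = ‖a‖ * ‖b‖ := mul_left_cancel₀ (ne_of_gt hcpos) hcseq
      have hnorm : ‖a‖ = ‖b‖ := by
        rcases mul_eq_zero.mp hg0 with h1 | h1
        · by_contra hne
          rcases lt_or_gt_of_ne hne with hlt | hgt
          · have := Real.rpow_lt_rpow hA hlt (by linarith : (0:ℝ) < p - 1)
            linarith
          · have := Real.rpow_lt_rpow hB hgt (by linarith : (0:ℝ) < p - 1)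
            linarith
        · linarith
      have := inner_eq_norm_mul_iff_real.mp hseq
      rw [← hnorm] at this
      exact smul_right_injective E (ne_of_gt hapos) this
  · intro h
    rw [h]; simp
end

section
/- Let E be a real Hilbert space, μ a measure on a measurable space α, and p > 1 a real number. Let F, G : α → E be strongly measurable with ∫ ‖F(x)‖^p dμ(x) < ∞ and ∫ ‖G(x)‖^p dμ(x) < ∞. Then the function φ : ℝ → ℝ defined by φ(h) := ∫ ‖F(x) + h·G(x)‖^p dμ(x) is differentiable at every h₀ ∈ ℝ, with φ′(h₀) = p·∫ ⟪Φ_p(F(x) + h₀·G(x)), G(x)⟫ dμ(x). -/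
open MeasureTheory
open scoped RealInnerProductSpace ENNReal

private lemma rpow_add_le_aux {a b q : ℝ} (ha : 0 ≤ a) (hb : 0 ≤ b) (hq : 0 ≤ q) :
    (a + b) ^ q ≤ 2 ^ q * (a ^ q + b ^ q) := by
  have h1 : (a + b) ^ q ≤ (2 * max a b) ^ q := by
    apply Real.rpow_le_rpow (by linarith) _ hq
    rcases le_total a b with h | h
    · simp [max_eq_right h]; linarith
    · simp [max_eq_left h]; linarith
  have h2 : (2 * max a b) ^ q = 2 ^ q * (max a b) ^ q :=
    Real.mul_rpow (by norm_num) (le_max_of_le_left ha)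
  have h3 : (max a b) ^ q ≤ a ^ q + b ^ q := by
    rcases le_total a b with h | h
    · simp only [max_eq_right h]
      nlinarith [Real.rpow_nonneg ha q]
    · simp only [max_eq_left h]
      nlinarith [Real.rpow_nonneg hb q]
  calc (a + b) ^ q ≤ 2 ^ q * (max a b) ^ q := h2 ▸ h1
    _ ≤ 2 ^ q * (a ^ q + b ^ q) := by
        have : (0:ℝ) ≤ (2:ℝ) ^ q := Real.rpow_nonneg (by norm_num) q
        nlinarith

private lemma young_aux {t s p : ℝ} (ht : 0 ≤ t) (hs : 0 ≤ s) (hp : 1 ≤ p) :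
    t ^ (p - 1) * s ≤ t ^ p + s ^ p := by
  rcases le_total t s with h | h
  · calc t ^ (p-1) * s ≤ s ^ (p-1) * s :=
          mul_le_mul_of_nonneg_right (Real.rpow_le_rpow ht h (by linarith)) hs
      _ = s ^ p := by rw [← Real.rpow_add_one' hs (by linarith)]; ring_nf
      _ ≤ t ^ p + s ^ p := by nlinarith [Real.rpow_nonneg ht p]
  · calc t ^ (p-1) * s ≤ t ^ (p-1) * t :=
          mul_le_mul_of_nonneg_left h (Real.rpow_nonneg ht _)
      _ = t ^ p := by rw [← Real.rpow_add_one' ht (by linarith)]; ring_nf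
      _ ≤ t ^ p + s ^ p := by nlinarith [Real.rpow_nonneg hs p]

private lemma integrable_rpow_norm_aux {E : Type*} [NormedAddCommGroup E]
    {α : Type*} [MeasurableSpace α] {μ : Measure α} {p : ℝ} (hp : 0 < p)
    {F : α → E} (hF : StronglyMeasurable F)
    (hFp : (∫⁻ x, ENNReal.ofReal (‖F x‖ ^ p) ∂μ) < ⊤) :
    Integrable (fun x => ‖F x‖ ^ p) μ := by
  have hm : AEStronglyMeasurable (fun x => ‖F x‖ ^ p) μ :=
    ((Real.continuous_rpow_const hp.le).comp_stronglyMeasurable hF.norm).aestronglyMeasurable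
  refine ⟨hm, ?_⟩
  rw [hasFiniteIntegral_iff_ofReal (Filter.Eventually.of_forall fun x =>
    Real.rpow_nonneg (norm_nonneg _) p)]
  exact hFp

private lemma hasDerivAt_aux {E : Type*} [NormedAddCommGroup E] [InnerProductSpace ℝ E]
    {p : ℝ} (hp : 1 < p) (a b : E) (h : ℝ) :
    HasDerivAt (fun h : ℝ => ‖a + h • b‖ ^ p)
      (p * ⟪(‖a + h • b‖ ^ (p - 2)) • (a + h • b), b⟫) h := by
  have hline : HasDerivAt (fun h : ℝ => a + h • b) b h := by
    simpa using ((hasDerivAt_id h).smul_const b).const_add a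
  have := (hasFDerivAt_norm_rpow (a + h • b) hp).comp_hasDerivAt h hline
  convert this using 1
  · rfl
  · rfl
  · rfl
  rw [ContinuousLinearMap.smul_apply, innerSL_apply_apply, real_inner_smul_left,
    smul_eq_mul, mul_assoc]

/-- Differentiation of the `p`-energy under the integral sign: for `p`-integrable strongly
measurable `F`, `G`, the function `h ↦ ∫ ‖F + h·G‖^p dμ` is differentiable at every `h₀`
with derivative `p·∫ ⟪Φ_p(F + h₀·G), G⟫ dμ`. -/
theorem hasDerivAt_pEnergy
    {E : Type*} [NormedAddCommGroup E] [InnerProductSpace ℝ E] [CompleteSpace E]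
    {α : Type*} [MeasurableSpace α] (μ : Measure α)
    (p : ℝ) (hp : 1 < p)
    (F G : α → E) (hF : StronglyMeasurable F) (hG : StronglyMeasurable G)
    (hFp : (∫⁻ x, ENNReal.ofReal (‖F x‖ ^ p) ∂μ) < ⊤)
    (hGp : (∫⁻ x, ENNReal.ofReal (‖G x‖ ^ p) ∂μ) < ⊤) :
    ∀ h₀ : ℝ, HasDerivAt (fun h : ℝ => ∫ x, ‖F x + h • G x‖ ^ p ∂μ)
      (p * ∫ x, ⟪(‖F x + h₀ • G x‖ ^ (p - 2)) • (F x + h₀ • G x), G x⟫ ∂μ) h₀ := by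
  intro h₀
  have hp0 : (0:ℝ) < p := lt_trans one_pos hp
  set C : ℝ := |h₀| + 1 with hCdef
  have hC1 : (1:ℝ) ≤ C := le_add_of_nonneg_left (abs_nonneg h₀)
  have hC0 : (0:ℝ) ≤ C := le_trans zero_le_one hC1
  have intF : Integrable (fun x => ‖F x‖ ^ p) μ := integrable_rpow_norm_aux hp0 hF hFp
  have intG : Integrable (fun x => ‖G x‖ ^ p) μ := integrable_rpow_norm_aux hp0 hG hGp
  -- measurability of the integrand for every h
  have smY : ∀ h : ℝ, StronglyMeasurable (fun x => F x + h • G x) :=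
    fun h => hF.add (hG.const_smul h)
  have meas : ∀ h : ℝ, AEStronglyMeasurable (fun x => ‖F x + h • G x‖ ^ p) μ := fun h =>
    ((Real.continuous_rpow_const hp0.le).comp_stronglyMeasurable
      (smY h).norm).aestronglyMeasurable
  -- basic norm estimate on the line, for h in the unit ball around h₀
  have hnorm : ∀ h : ℝ, h ∈ Metric.ball h₀ 1 → ∀ x,
      ‖F x + h • G x‖ ≤ ‖F x‖ + C * ‖G x‖ := by
    intro h hh x
    have habs : |h| ≤ C := by
      have := Metric.mem_ball.mp hh
      rw [Real.dist_eq] at this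
      calc |h| = |(h - h₀) + h₀| := by ring_nf
        _ ≤ |h - h₀| + |h₀| := abs_add_le _ _
        _ ≤ C := by rw [hCdef]; linarith
    calc ‖F x + h • G x‖ ≤ ‖F x‖ + ‖h • G x‖ := norm_add_le _ _
      _ = ‖F x‖ + |h| * ‖G x‖ := by rw [norm_smul, Real.norm_eq_abs]
      _ ≤ ‖F x‖ + C * ‖G x‖ := by
          have := mul_le_mul_of_nonneg_right habs (norm_nonneg (G x))
          linarith
  -- integrability of the integrand at h₀
  have hdom : Integrable (fun x => 2 ^ p * ‖F x‖ ^ p + 2 ^ p * (C ^ p * ‖G x‖ ^ p)) μ :=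
    (intF.const_mul _).add ((intG.const_mul _).const_mul _)
  have hF_int : Integrable (fun x => ‖F x + h₀ • G x‖ ^ p) μ := by
    refine hdom.mono' (meas h₀) (Filter.Eventually.of_forall fun x => ?_)
    have h1 : ‖F x + h₀ • G x‖ ≤ ‖F x‖ + C * ‖G x‖ :=
      hnorm h₀ (Metric.mem_ball_self one_pos) x
    calc ‖‖F x + h₀ • G x‖ ^ p‖ = ‖F x + h₀ • G x‖ ^ p :=
          Real.norm_of_nonneg (Real.rpow_nonneg (norm_nonneg _) p)
      _ ≤ (‖F x‖ + C * ‖G x‖) ^ p := Real.rpow_le_rpow (norm_nonneg _) h1 hp0.le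
      _ ≤ 2 ^ p * (‖F x‖ ^ p + (C * ‖G x‖) ^ p) :=
          rpow_add_le_aux (norm_nonneg _) (by positivity) hp0.le
      _ = 2 ^ p * ‖F x‖ ^ p + 2 ^ p * (C ^ p * ‖G x‖ ^ p) := by
          rw [Real.mul_rpow hC0 (norm_nonneg _)]; ring
  -- the derivative integrand and its measurability
  have hF'_meas : AEStronglyMeasurable
      (fun x => p * ⟪(‖F x + h₀ • G x‖ ^ (p - 2)) • (F x + h₀ • G x), G x⟫) μ := by
    have hys : Measurable fun x => ‖F x + h₀ • G x‖ := (smY h₀).norm.measurable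
    have hmeas_scalar : Measurable fun x => ‖F x + h₀ • G x‖ ^ (p - 2) := by
      have heq : ∀ x, ‖F x + h₀ • G x‖ ^ (p - 2) =
          if ‖F x + h₀ • G x‖ = 0 then (0:ℝ) ^ (p - 2)
          else Real.exp (Real.log ‖F x + h₀ • G x‖ * (p - 2)) := by
        intro x
        split_ifs with h
        · rw [h]
        · rw [Real.rpow_def_of_pos (lt_of_le_of_ne (norm_nonneg _) (Ne.symm h))]
      simp_rw [heq]
      exact Measurable.ite (hys (measurableSet_singleton 0)) measurable_const
        (Real.measurable_exp.comp ((Real.measurable_log.comp hys).mul_const _))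
    have hsm : StronglyMeasurable
        (fun x => (‖F x + h₀ • G x‖ ^ (p - 2)) • (F x + h₀ • G x)) :=
      hmeas_scalar.stronglyMeasurable.smul (smY h₀)
    exact ((hsm.inner (𝕜 := ℝ) hG).aestronglyMeasurable.const_mul p)
  -- bound on the derivative
  set bound : α → ℝ :=
    fun x => p * (2 ^ p * ‖F x‖ ^ p + (2 ^ p + 1) * (C ^ p * ‖G x‖ ^ p)) with hbdef
  have bound_int : Integrable bound μ := by
    refine Integrable.const_mul ?_ p
    exact (intF.const_mul _).add ((intG.const_mul _).const_mul _)
  have h_bound : ∀ᵐ x ∂μ, ∀ h ∈ Metric.ball h₀ 1,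
      ‖p * ⟪(‖F x + h • G x‖ ^ (p - 2)) • (F x + h • G x), G x⟫‖ ≤ bound x := by
    refine Filter.Eventually.of_forall fun x => fun h hh => ?_
    set y : E := F x + h • G x with hy
    have key : |⟪(‖y‖ ^ (p - 2)) • y, G x⟫| ≤ ‖y‖ ^ (p - 1) * ‖G x‖ := by
      rcases eq_or_ne y 0 with h0 | h0
      · simp only [h0, smul_zero, inner_zero_left, abs_zero]
        positivity
      · calc |⟪(‖y‖ ^ (p - 2)) • y, G x⟫| ≤ ‖(‖y‖ ^ (p - 2)) • y‖ * ‖G x‖ :=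
              abs_real_inner_le_norm _ _
          _ = ‖y‖ ^ (p - 1) * ‖G x‖ := by
              rw [norm_smul, Real.norm_of_nonneg (Real.rpow_nonneg (norm_nonneg _) _)]
              congr 1
              rw [show p - 1 = (p - 2) + 1 by ring,
                Real.rpow_add_one (norm_ne_zero_iff.mpr h0)]
    have hyb : ‖y‖ ≤ ‖F x‖ + C * ‖G x‖ := hnorm h hh x
    have step1 : ‖y‖ ^ (p - 1) * ‖G x‖ ≤ (‖F x‖ + C * ‖G x‖) ^ (p - 1) * (C * ‖G x‖) := by
      have e1 : ‖y‖ ^ (p - 1) ≤ (‖F x‖ + C * ‖G x‖) ^ (p - 1) :=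
        Real.rpow_le_rpow (norm_nonneg _) hyb (by linarith)
      have e2 : ‖G x‖ ≤ C * ‖G x‖ := by nlinarith [norm_nonneg (G x)]
      have e3 : (0:ℝ) ≤ ‖y‖ ^ (p - 1) := Real.rpow_nonneg (norm_nonneg _) _
      nlinarith [norm_nonneg (G x), Real.rpow_nonneg
        (show (0:ℝ) ≤ ‖F x‖ + C * ‖G x‖ by positivity) (p - 1)]
    have step2 : (‖F x‖ + C * ‖G x‖) ^ (p - 1) * (C * ‖G x‖)
        ≤ (‖F x‖ + C * ‖G x‖) ^ p + (C * ‖G x‖) ^ p :=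
      young_aux (by positivity) (by positivity) hp.le
    have step3 : (‖F x‖ + C * ‖G x‖) ^ p ≤ 2 ^ p * (‖F x‖ ^ p + (C * ‖G x‖) ^ p) :=
      rpow_add_le_aux (norm_nonneg _) (by positivity) hp0.le
    have hCG : (C * ‖G x‖) ^ p = C ^ p * ‖G x‖ ^ p := Real.mul_rpow hC0 (norm_nonneg _)
    rw [Real.norm_eq_abs, abs_mul, abs_of_pos hp0, hbdef]
    refine mul_le_mul_of_nonneg_left ?_ hp0.le
    calc |⟪(‖y‖ ^ (p - 2)) • y, G x⟫| ≤ ‖y‖ ^ (p - 1) * ‖G x‖ := key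
      _ ≤ (‖F x‖ + C * ‖G x‖) ^ (p - 1) * (C * ‖G x‖) := step1
      _ ≤ (‖F x‖ + C * ‖G x‖) ^ p + (C * ‖G x‖) ^ p := step2
      _ ≤ 2 ^ p * (‖F x‖ ^ p + (C * ‖G x‖) ^ p) + (C * ‖G x‖) ^ p := by linarith
      _ = 2 ^ p * ‖F x‖ ^ p + (2 ^ p + 1) * (C ^ p * ‖G x‖ ^ p) := by rw [hCG]; ring
  have h_diff : ∀ᵐ x ∂μ, ∀ h ∈ Metric.ball h₀ 1,
      HasDerivAt (fun h : ℝ => ‖F x + h • G x‖ ^ p)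
        (p * ⟪(‖F x + h • G x‖ ^ (p - 2)) • (F x + h • G x), G x⟫) h :=
    Filter.Eventually.of_forall fun x h _ => hasDerivAt_aux hp (F x) (G x) h
  have main := hasDerivAt_integral_of_dominated_loc_of_deriv_le (Metric.ball_mem_nhds h₀ one_pos)
    (Filter.Eventually.of_forall meas) hF_int hF'_meas h_bound bound_int h_diff
  rw [← integral_const_mul]
  exact main.2
end

section
/- Let (Z,d) be a separable metric space, ν a finite Borel measure on Z, p ≥ 1 a real number, and θ > 0. Let f : Z → ℝ be Borel measurable with Besov energy E_{θ,p}(f) = 0. Then there exists a constant c ∈ ℝ such that f(x) = c for ν-almost every x ∈ Z. -/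
open MeasureTheory Metric
open scoped ENNReal

lemma measurable_measure_ball_dist
    {Z : Type*} [MetricSpace Z] [TopologicalSpace.SeparableSpace Z]
    [MeasurableSpace Z] [BorelSpace Z]
    (ν : Measure Z) [SFinite ν] :
    Measurable (fun q : Z × Z => ν (ball q.1 (dist q.1 q.2))) := by
  haveI := UniformSpace.secondCountable_of_separable Z
  have hs : MeasurableSet {w : (Z × Z) × Z | dist w.2 w.1.1 < dist w.1.1 w.1.2} := by
    exact measurableSet_lt (measurable_snd.dist (measurable_fst.comp measurable_fst))
      ((measurable_fst.comp measurable_fst).dist (measurable_snd.comp measurable_fst))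
  have key : ∀ q : Z × Z, ν (ball q.1 (dist q.1 q.2)) =
      ∫⁻ z, Set.indicator {w : (Z × Z) × Z | dist w.2 w.1.1 < dist w.1.1 w.1.2}
        (fun _ => (1 : ℝ≥0∞)) (q, z) ∂ν := by
    intro q
    have : (fun z => Set.indicator {w : (Z × Z) × Z | dist w.2 w.1.1 < dist w.1.1 w.1.2}
        (fun _ => (1 : ℝ≥0∞)) (q, z)) =
        (ball q.1 (dist q.1 q.2)).indicator (fun _ => (1 : ℝ≥0∞)) := by
      ext z
      by_cases h : dist z q.1 < dist q.1 q.2 <;>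
        simp [Set.indicator_apply, Metric.mem_ball, h]
    rw [this, lintegral_indicator measurableSet_ball]
    simp
  simp only [key]
  exact Measurable.lintegral_prod_right' ((measurable_const).indicator hs)

/-- If a Borel function on a separable metric space equipped with a finite Borel measure has
vanishing Besov energy
`E_{θ,p}(f) = ∫∫ |f(y) − f(x)|^p / (d(y,x)^{θp}·ν(B(y,d(y,x)))) dν(x) dν(y) = 0`,
then `f` is ν-a.e. equal to a constant. -/
theorem ae_const_of_besov_energy_zero
    {Z : Type*} [MetricSpace Z] [TopologicalSpace.SeparableSpace Z]
    [MeasurableSpace Z] [BorelSpace Z]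
    (ν : Measure Z) [IsFiniteMeasure ν]
    (p θ : ℝ) (hp : 1 ≤ p) (hθ : 0 < θ)
    (f : Z → ℝ) (hf : Measurable f)
    (hE : (∫⁻ y, ∫⁻ x, ENNReal.ofReal (|f y - f x| ^ p) /
        (ENNReal.ofReal (dist y x ^ (θ * p)) * ν (ball y (dist y x))) ∂ν ∂ν) = 0) :
    ∃ c : ℝ, ∀ᵐ x ∂ν, f x = c := by
  haveI := UniformSpace.secondCountable_of_separable Z
  rcases eq_or_ne ν 0 with hν | hν
  · exact ⟨0, by simp [hν]⟩
  set G : Z × Z → ℝ≥0∞ := fun q => ENNReal.ofReal (|f q.1 - f q.2| ^ p) /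
      (ENNReal.ofReal (dist q.1 q.2 ^ (θ * p)) * ν (ball q.1 (dist q.1 q.2))) with hGdef
  have hG : Measurable G := by
    apply Measurable.div
    · apply Measurable.ennreal_ofReal
      exact (((hf.comp measurable_fst).sub (hf.comp measurable_snd)).abs).pow measurable_const
    · exact (Measurable.ennreal_ofReal (measurable_dist.pow measurable_const)).mul
        (measurable_measure_ball_dist ν)
  -- G = 0 implies f x = f y
  have hzero : ∀ y x : Z, G (y, x) = 0 → f x = f y := by
    intro y x h
    rcases ENNReal.div_eq_zero_iff.mp h with hnum | hden
    · have h1 : |f y - f x| ^ p = 0 := le_antisymm (ENNReal.ofReal_eq_zero.mp hnum)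
        (Real.rpow_nonneg (abs_nonneg _) p)
      have h2 : |f y - f x| = 0 := by
        rcases (Real.rpow_eq_zero (abs_nonneg _) (by linarith)).mp h1 with h2
        exact h2
      have := abs_eq_zero.mp h2
      linarith [sub_eq_zero.mp this]
    · exfalso
      rcases ENNReal.mul_eq_top.mp hden with ⟨_, h⟩ | ⟨h, _⟩
      · exact (measure_ne_top ν _) h
      · exact ENNReal.ofReal_ne_top h
  have h1 : ∀ᵐ y ∂ν, (∫⁻ x, G (y, x) ∂ν) = 0 := by
    have := (lintegral_eq_zero_iff hG.lintegral_prod_right').mp hE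
    filter_upwards [this] with y hy using hy
  have h2 : ∀ᵐ y ∂ν, ∀ᵐ x ∂ν, f x = f y := by
    filter_upwards [h1] with y hy
    have : ∀ᵐ x ∂ν, G (y, x) = 0 :=
      (lintegral_eq_zero_iff (hG.comp measurable_prodMk_left)).mp hy
    filter_upwards [this] with x hx using hzero y x hx
  have : (ae ν).NeBot := ae_neBot.mpr hν
  obtain ⟨y₀, hy₀⟩ := h2.exists
  exact ⟨f y₀, hy₀⟩
end

section
/- Let (Z,d) be a separable bounded metric space and ν a nonzero finite Borel measure on Z, let p ≥ 1 be a real number and θ > 0. If f : Z → ℝ is Borel measurable with finite Besov energy E_{θ,p}(f) < ∞, then f ∈ L^p(ν), i.e., ∫_Z |f|^p dν < ∞. -/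
open MeasureTheory Metric
open scoped ENNReal

/-- On a separable bounded metric space with a nonzero finite Borel measure `ν`, any Borel
function with finite Besov energy
`E_{θ,p}(f) = ∫∫ |f(y) − f(x)|^p / (d(y,x)^{θp}·ν(B(y,d(y,x)))) dν(x) dν(y)`
belongs to `L^p(ν)`. -/
theorem memLp_of_besov_energy_finite
    {Z : Type*} [MetricSpace Z] [TopologicalSpace.SeparableSpace Z] [BoundedSpace Z]
    [MeasurableSpace Z] [BorelSpace Z]
    (ν : Measure Z) [IsFiniteMeasure ν] (hν : ν ≠ 0)
    (p θ : ℝ) (hp : 1 ≤ p) (hθ : 0 < θ)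
    (f : Z → ℝ) (hf : Measurable f)
    (hE : (∫⁻ y, ∫⁻ x, ENNReal.ofReal (|f y - f x| ^ p) /
        (ENNReal.ofReal (dist y x ^ (θ * p)) * ν (ball y (dist y x))) ∂ν ∂ν) < ⊤) :
    (∫⁻ x, ENNReal.ofReal (|f x| ^ p) ∂ν) < ⊤ := by
  set D : ℝ := Metric.diam (Set.univ : Set Z) + 1 with hD
  have hDpos : 0 < D := by positivity
  have hθp : 0 < θ * p := mul_pos hθ (lt_of_lt_of_le one_pos hp)
  set C : ℝ≥0∞ := ENNReal.ofReal (D ^ (θ * p)) * ν Set.univ with hC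
  have hC0 : C ≠ 0 := by
    apply mul_ne_zero
    · exact (ENNReal.ofReal_pos.mpr (by positivity)).ne'
    · exact (Measure.measure_univ_ne_zero).mpr hν
  have hCtop : C ≠ ⊤ := ENNReal.mul_ne_top ENNReal.ofReal_ne_top (measure_ne_top ν _)
  -- pointwise bound of numerator by C times the Besov integrand
  have key : ∀ y x : Z, ENNReal.ofReal (|f y - f x| ^ p) ≤
      C * (ENNReal.ofReal (|f y - f x| ^ p) /
        (ENNReal.ofReal (dist y x ^ (θ * p)) * ν (ball y (dist y x)))) := by
    intro y x
    have hdist : dist y x ≤ D := by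
      have := Metric.dist_le_diam_of_mem (Bornology.isBounded_univ.mpr ‹_›)
        (Set.mem_univ y) (Set.mem_univ x)
      linarith
    have hden : ENNReal.ofReal (dist y x ^ (θ * p)) * ν (ball y (dist y x)) ≤ C := by
      refine mul_le_mul' (ENNReal.ofReal_le_ofReal ?_) (measure_mono (Set.subset_univ _))
      exact Real.rpow_le_rpow dist_nonneg hdist hθp.le
    calc ENNReal.ofReal (|f y - f x| ^ p)
        = C * (ENNReal.ofReal (|f y - f x| ^ p) / C) :=
          (ENNReal.mul_div_cancel hC0 hCtop).symm
      _ ≤ _ := mul_le_mul_right (ENNReal.div_le_div_left hden _) _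
  have hmeas2 : Measurable fun q : Z × Z => ENNReal.ofReal (|f q.1 - f q.2| ^ p) :=
    ((Real.continuous_rpow_const (by linarith : (0:ℝ) ≤ p)).measurable.comp
      ((hf.comp measurable_fst).sub (hf.comp measurable_snd)).abs).ennreal_ofReal
  have hg : Measurable fun y => ∫⁻ x, ENNReal.ofReal (|f y - f x| ^ p) ∂ν :=
    hmeas2.lintegral_prod_right'
  have h1 : (∫⁻ y, ∫⁻ x, ENNReal.ofReal (|f y - f x| ^ p) ∂ν ∂ν) < ⊤ := by
    have : (∫⁻ y, ∫⁻ x, ENNReal.ofReal (|f y - f x| ^ p) ∂ν ∂ν) ≤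
        C * (∫⁻ y, ∫⁻ x, ENNReal.ofReal (|f y - f x| ^ p) /
          (ENNReal.ofReal (dist y x ^ (θ * p)) * ν (ball y (dist y x))) ∂ν ∂ν) := by
      rw [← lintegral_const_mul' _ _ hCtop]
      refine lintegral_mono fun y => ?_
      rw [← lintegral_const_mul' _ _ hCtop]
      exact lintegral_mono fun x => key y x
    exact lt_of_le_of_lt this (ENNReal.mul_lt_top hCtop.lt_top hE)
  haveI : (ae ν).NeBot := ae_neBot.mpr hν
  obtain ⟨y0, hy0⟩ : ∃ y0, (∫⁻ x, ENNReal.ofReal (|f y0 - f x| ^ p) ∂ν) < ⊤ :=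
    (ae_lt_top hg h1.ne).exists
  -- pointwise bound for |f x|^p
  have ptw : ∀ x : Z, ENNReal.ofReal (|f x| ^ p) ≤
      ENNReal.ofReal (2 ^ p) *
        (ENNReal.ofReal (|f y0 - f x| ^ p) + ENNReal.ofReal (|f y0| ^ p)) := by
    intro x
    have hreal : |f x| ^ p ≤ 2 ^ p * (|f y0 - f x| ^ p + |f y0| ^ p) := by
      set a := |f y0 - f x|
      set b := |f y0|
      have ha : 0 ≤ a := abs_nonneg _
      have hb : 0 ≤ b := abs_nonneg _
      have h1 : |f x| ≤ a + b := by
        calc |f x| = |(f x - f y0) + f y0| := by ring_nf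
          _ ≤ |f x - f y0| + |f y0| := abs_add_le _ _
          _ = a + b := by rw [abs_sub_comm]
      have h2 : |f x| ≤ 2 * max a b := by
        calc |f x| ≤ a + b := h1
          _ ≤ max a b + max a b := add_le_add (le_max_left _ _) (le_max_right _ _)
          _ = 2 * max a b := (two_mul _).symm
      have h3 : |f x| ^ p ≤ (2 * max a b) ^ p :=
        Real.rpow_le_rpow (abs_nonneg _) h2 (by linarith)
      have h4 : (2 * max a b) ^ p = 2 ^ p * (max a b) ^ p :=
        Real.mul_rpow (by norm_num) (le_max_of_le_left ha)
      have h5 : (max a b) ^ p ≤ a ^ p + b ^ p := by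
        rcases le_total a b with h | h
        · rw [max_eq_right h]
          exact le_add_of_nonneg_left (Real.rpow_nonneg ha p)
        · rw [max_eq_left h]
          exact le_add_of_nonneg_right (Real.rpow_nonneg hb p)
      calc |f x| ^ p ≤ 2 ^ p * (max a b) ^ p := by rw [← h4]; exact h3
        _ ≤ 2 ^ p * (a ^ p + b ^ p) := by
            refine mul_le_mul_of_nonneg_left h5 (Real.rpow_nonneg (by norm_num) p)
    calc ENNReal.ofReal (|f x| ^ p)
        ≤ ENNReal.ofReal (2 ^ p * (|f y0 - f x| ^ p + |f y0| ^ p)) :=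
          ENNReal.ofReal_le_ofReal hreal
      _ = ENNReal.ofReal (2 ^ p) *
            (ENNReal.ofReal (|f y0 - f x| ^ p) + ENNReal.ofReal (|f y0| ^ p)) := by
          rw [ENNReal.ofReal_mul (Real.rpow_nonneg (by norm_num) p),
            ENNReal.ofReal_add (Real.rpow_nonneg (abs_nonneg _) p)
              (Real.rpow_nonneg (abs_nonneg _) p)]
  calc (∫⁻ x, ENNReal.ofReal (|f x| ^ p) ∂ν)
      ≤ ∫⁻ x, ENNReal.ofReal (2 ^ p) *
          (ENNReal.ofReal (|f y0 - f x| ^ p) + ENNReal.ofReal (|f y0| ^ p)) ∂ν :=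
        lintegral_mono ptw
    _ = ENNReal.ofReal (2 ^ p) *
          ((∫⁻ x, ENNReal.ofReal (|f y0 - f x| ^ p) ∂ν) + ENNReal.ofReal (|f y0| ^ p) * ν Set.univ) := by
        have hm : Measurable fun x => ENNReal.ofReal (|f y0 - f x| ^ p) :=
          ((Real.continuous_rpow_const (by linarith : (0:ℝ) ≤ p)).measurable.comp
            (hf.const_sub _).abs).ennreal_ofReal
        rw [lintegral_const_mul' _ _ ENNReal.ofReal_ne_top, lintegral_add_left hm,
          lintegral_const]
    _ < ⊤ := by
        refine ENNReal.mul_lt_top ENNReal.ofReal_lt_top ?_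
        exact ENNReal.add_lt_top.mpr ⟨hy0, ENNReal.mul_lt_top ENNReal.ofReal_lt_top (measure_lt_top ν _)⟩
end
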